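/- arXiv:2509.24574 — 7 statements merged into one kernel-verified Lean document; each statement's English description precedes it below -/
import Mathlib

section
/- Let L be a Lie algebra and a a Lie subalgebra such that a acts locally nilpotently on the a-module L/a. Let φ: a → C be a Lie algebra homomorphism and V an L-module generated by a nonzero vector w with x.w = φ(x)w for all x ∈ a. Then for every x ∈ a, the operator x − φ(x) acts locally nilpotently on V. -/
/-!
Fix `x ∈ a` and let `N ⊆ V` be the set of vectors killed by a power of `T = x - φ(x)`, i.e. the
generalized `φ(x)`-eigenspace of `x`. Let `K` be the largest `a`-submodule of `V` contained in `N`;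
it contains the common eigenvector `w`. For `y ∈ L` and `m ∈ K` the Leibniz rule gives
`T^n ⁅y, m⁆ = ∑ (n choose i) ⁅(ad x)^i y, T^(n-i) m⁆`. Once `n` is large, each term has either
`T^(n-i) m = 0` or `(ad x)^i y ∈ a`, so `T^n ⁅y, m⁆ ∈ K ⊆ N`, whence `⁅y, m⁆ ∈ N`. The `a`-submodule
spanned by all such brackets therefore lies in `N`, hence in `K`: so `K` is an `L`-submodule
containing `w`, and `K = V`.
-/

section

open LieModule Finset

variable {R L M : Type*} [CommRing R] [LieRing L] [LieAlgebra R L]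
  [AddCommGroup M] [Module R M] [LieRingModule L M]

variable (R) in
lemma LieAlgebra.foldr_lie_replicate (x y : L) (n : ℕ) :
    (List.replicate n x).foldr (fun u z ↦ ⁅u, z⁆) y = (LieAlgebra.ad R L x ^ n) y := by
  induction n with
  | zero => rfl
  | succ n ih =>
    rw [List.replicate_succ, List.foldr_cons, ih, pow_succ', Module.End.mul_apply,
      LieAlgebra.ad_apply]

namespace LieModule

variable [LieModule R L M]

lemma toEnd_sub_smul_lie (x y : L) (χ : R) (m : M) :
    (toEnd R L M x - χ • 1) ⁅y, m⁆ =
      ⁅LieAlgebra.ad R L x y, m⁆ + ⁅y, (toEnd R L M x - χ • 1) m⁆ := by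
  simp only [LinearMap.sub_apply, LinearMap.smul_apply, Module.End.one_apply, toEnd_lie,
    lie_sub, lie_smul]
  abel

lemma toEnd_sub_smul_pow_lie (x y : L) (χ : R) (m : M) (n : ℕ) :
    ((toEnd R L M x - χ • 1) ^ n) ⁅y, m⁆ = ∑ ij ∈ antidiagonal n,
      n.choose ij.1 • ⁅(LieAlgebra.ad R L x ^ ij.1) y, ((toEnd R L M x - χ • 1) ^ ij.2) m⁆ := by
  induction n with
  | zero => simp
  | succ n ih =>
    rw [sum_antidiagonal_choose_succ_nsmul
      (fun i j ↦ ⁅(LieAlgebra.ad R L x ^ i) y, ((toEnd R L M x - χ • 1) ^ j) m⁆) n]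
    simp only [pow_succ', Module.End.mul_apply, ih, map_sum, map_nsmul, toEnd_sub_smul_lie,
      nsmul_add, sum_add_distrib]
    rw [add_comm, add_left_cancel_iff, sum_congr rfl]
    rintro ⟨i, j⟩ hij
    rw [Nat.choose_symm_of_eq_add (mem_antidiagonal.mp hij).symm]

end LieModule

namespace LieSubmodule

variable [LieModule R L M] {H : LieSubalgebra R L}

lemma lie_mem_maxGenEigenspace_of_ad_pow_mem (K : LieSubmodule R H M) {x : H} {χ : R}
    (hK : (K : Submodule R M) ≤ (toEnd R L M x).maxGenEigenspace χ) {y : L} {n : ℕ}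
    (hy : (LieAlgebra.ad R L x ^ n) y ∈ H) {m : M} (hm : m ∈ K) :
    ⁅y, m⁆ ∈ (toEnd R L M x).maxGenEigenspace χ := by
  set T := toEnd R L M x - χ • 1
  obtain ⟨k, hk⟩ := (Module.End.mem_maxGenEigenspace _ _ _).mp (hK hm)
  have hT : ∀ j, (T ^ j) m ∈ K := fun j ↦ Module.End.pow_apply_mem_of_forall_mem j
    (fun v hv ↦ K.sub_mem (K.lie_mem (x := x) hv) (K.smul_mem χ hv)) m hm
  have hpow : (T ^ (n + k)) ⁅y, m⁆ ∈ K := by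
    rw [toEnd_sub_smul_pow_lie]
    refine K.sum_mem fun ij hij ↦ K.smul_of_tower_mem _ ?_
    obtain ⟨i, j⟩ := ij
    rcases le_or_gt n i with hi | hi
    · obtain ⟨i, rfl⟩ := Nat.exists_eq_add_of_le' hi
      have hy' : (LieAlgebra.ad R L x ^ (i + n)) y ∈ H := by
        rw [pow_add, Module.End.mul_apply]
        exact Module.End.pow_apply_mem_of_forall_mem (p := H.toSubmodule) i
          (fun z hz ↦ H.lie_mem x.2 hz) _ hy
      exact K.lie_mem (x := ⟨_, hy'⟩) (hT j)
    · have hj : k ≤ j := by have := mem_antidiagonal.mp hij; omega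
      rw [Module.End.pow_map_zero_of_le hj hk, lie_zero]
      exact K.zero_mem
  obtain ⟨p, hp⟩ := (Module.End.mem_maxGenEigenspace _ _ _).mp (hK hpow)
  exact (Module.End.mem_maxGenEigenspace _ _ _).mpr
    ⟨p + (n + k), by rwa [pow_add, Module.End.mul_apply]⟩

def bracketSpan (K : LieSubmodule R H M) : LieSubmodule R H M :=
  { Submodule.span R {m | ∃ y : L, ∃ v ∈ K, ⁅y, v⁆ = m} with
    lie_mem := by
      intro z m (hm : m ∈ Submodule.span R _)
      show ⁅z, m⁆ ∈ Submodule.span R _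
      induction hm using Submodule.span_induction with
      | mem m hm =>
        obtain ⟨y, v, hv, rfl⟩ := hm
        rw [LieSubalgebra.coe_bracket_of_module, leibniz_lie]
        exact add_mem (Submodule.subset_span ⟨_, v, hv, rfl⟩)
          (Submodule.subset_span ⟨y, _, K.lie_mem hv, rfl⟩)
      | zero => simp
      | add m m' _ _ hm hm' => rw [lie_add]; exact add_mem hm hm'
      | smul c m _ hm => rw [lie_smul]; exact Submodule.smul_mem _ c hm }

lemma bracketSpan_le_maxGenEigenspace (K : LieSubmodule R H M) {x : H} {χ : R}
    (hK : (K : Submodule R M) ≤ (toEnd R L M x).maxGenEigenspace χ)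
    (hloc : ∀ y : L, ∃ n : ℕ, (LieAlgebra.ad R L x ^ n) y ∈ H) :
    (K.bracketSpan : Submodule R M) ≤ (toEnd R L M x).maxGenEigenspace χ := by
  refine Submodule.span_le.mpr ?_
  rintro _ ⟨y, m, hm, rfl⟩
  obtain ⟨n, hn⟩ := hloc y
  exact K.lie_mem_maxGenEigenspace_of_ad_pow_mem hK hn hm

end LieSubmodule

namespace Submodule

variable (H : LieSubalgebra R L) (N : Submodule R M)

def lieCore : LieSubmodule R H M :=
  sSup {K | (K : Submodule R M) ≤ N}

lemma lieCore_le : (N.lieCore H : Submodule R M) ≤ N := by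
  rw [lieCore, LieSubmodule.sSup_toSubmodule]
  exact sSup_le (by rintro _ ⟨K, hK, rfl⟩; exact hK)

variable {H N}

lemma le_lieCore {K : LieSubmodule R H M} (hK : (K : Submodule R M) ≤ N) : K ≤ N.lieCore H :=
  le_sSup hK

variable [LieModule R L M]

lemma mem_lieCore_of_lie_eq_smul {w : M} (hwN : w ∈ N) (φ : H → R)
    (hw : ∀ z : H, ⁅(z : L), w⁆ = φ z • w) : w ∈ N.lieCore H := by
  let K : LieSubmodule R H M :=
    { span R {w} with
      lie_mem := by
        intro z m hm
        obtain ⟨c, rfl⟩ := mem_span_singleton.mp hm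
        rw [lie_smul, LieSubalgebra.coe_bracket_of_module, hw, smul_smul]
        exact mem_span_singleton.mpr ⟨_, rfl⟩ }
  exact le_lieCore (K := K) (span_le.mpr (Set.singleton_subset_iff.mpr hwN))
    (subset_span (Set.mem_singleton w))

lemma lie_mem_lieCore_maxGenEigenspace {x : H} {χ : R}
    (hloc : ∀ y : L, ∃ n : ℕ, (LieAlgebra.ad R L x ^ n) y ∈ H) (y : L) {m : M}
    (hm : m ∈ ((toEnd R L M x).maxGenEigenspace χ).lieCore H) :
    ⁅y, m⁆ ∈ ((toEnd R L M x).maxGenEigenspace χ).lieCore H :=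
  le_lieCore (LieSubmodule.bracketSpan_le_maxGenEigenspace _ (lieCore_le _ _) hloc)
    (subset_span ⟨y, m, hm, rfl⟩)

end Submodule

end

theorem stmt3_general (L : Type*) [LieRing L] [LieAlgebra ℂ L]
    (a : LieSubalgebra ℂ L)
    (hnil : ∀ y : L, ∃ n : ℕ, ∀ xs : List L, (∀ x ∈ xs, x ∈ a) → xs.length = n →
      xs.foldr (fun x z => ⁅x, z⁆) y ∈ a)
    (φ : a →ₗ[ℂ] ℂ)
    (V : Type*) [AddCommGroup V] [Module ℂ V] [LieRingModule L V] [LieModule ℂ L V]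
    (w : V)
    (hwh : ∀ x : a, ⁅(x : L), w⁆ = φ x • w)
    (hgen : ∀ W : LieSubmodule ℂ L V, w ∈ W → W = ⊤) :
    ∀ (x : a) (u : V), ∃ n : ℕ,
      (fun z : V => ⁅(x : L), z⁆ - φ x • z)^[n] u = 0 := by
  intro x u
  set N := (LieModule.toEnd ℂ L V x).maxGenEigenspace (φ x)
  have hloc : ∀ y : L, ∃ n : ℕ, (LieAlgebra.ad ℂ L x ^ n) y ∈ a := fun y ↦
    (hnil y).imp fun n hn ↦ by
      simpa [LieAlgebra.foldr_lie_replicate ℂ] using hn (List.replicate n x) (by simp) (by simp)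
  let W : LieSubmodule ℂ L V :=
    { (N.lieCore a : Submodule ℂ V) with
      lie_mem := Submodule.lie_mem_lieCore_maxGenEigenspace hloc _ }
  have hwN : w ∈ N := Module.End.eigenspace_le_maxGenEigenspace
    (Module.End.mem_eigenspace_iff.mpr (hwh x))
  have hW : W = ⊤ := hgen W (Submodule.mem_lieCore_of_lie_eq_smul hwN φ hwh)
  obtain ⟨k, hk⟩ := (Module.End.mem_maxGenEigenspace _ _ _).mp
    (N.lieCore_le a (hW ▸ LieSubmodule.mem_top u : u ∈ W))
  have hT : (fun z : V => ⁅(x : L), z⁆ - φ x • z) = ⇑(LieModule.toEnd ℂ L V x - φ x • 1) := by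
    ext; simp
  exact ⟨k, by rwa [hT, ← Module.End.pow_apply]⟩

/-- Let `L` be a complex Lie algebra, `a` a Lie subalgebra acting locally
nilpotently on the `a`-module `L/a` (for every `y ∈ L` some power of products of
elements of `a` maps `y` into `a`), `φ : a → ℂ` a Lie algebra homomorphism, and `V`
an `L`-module generated by a nonzero vector `w` with `x·w = φ(x)w` for all `x ∈ a`.
Then for every `x ∈ a` the operator `x − φ(x)` acts locally nilpotently on `V`. -/
theorem stmt3 (L : Type*) [LieRing L] [LieAlgebra ℂ L]
    (a : LieSubalgebra ℂ L)
    (hnil : ∀ y : L, ∃ n : ℕ, ∀ xs : List L, (∀ x ∈ xs, x ∈ a) → xs.length = n →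
      xs.foldr (fun x z => ⁅x, z⁆) y ∈ a)
    (φ : a →ₗ[ℂ] ℂ) (hφ : ∀ x y : a, φ ⁅x, y⁆ = 0)
    (V : Type*) [AddCommGroup V] [Module ℂ V] [LieRingModule L V] [LieModule ℂ L V]
    (w : V) (hw : w ≠ 0)
    (hwh : ∀ x : a, ⁅(x : L), w⁆ = φ x • w)
    (hgen : ∀ W : LieSubmodule ℂ L V, w ∈ W → W = ⊤) :
    ∀ (x : a) (u : V), ∃ n : ℕ,
      (fun z : V => ⁅(x : L), z⁆ - φ x • z)^[n] u = 0 :=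
  stmt3_general L a hnil φ V w hwh hgen
end

section
/- Let L be a Lie algebra and a a Lie subalgebra acting locally nilpotently on L/a, and let V be a Whittaker L-module of type φ. Then every nonzero submodule of V contains a nonzero Whittaker vector of type φ, i.e., a nonzero vector v with x.v = φ(x)v for all x ∈ a. -/
/-!
For `x ∈ a` let `T x v = ⁅x, v⁆ - φ(x) v`, and call `v` twisted-nilpotent if every product
of some fixed number `d` of operators `T x` kills it. The Leibniz rule
`T x ⁅y, v⁆ = ⁅⁅x, y⁆, v⁆ + ⁅y, T x v⁆`, together with the local nilpotence of `a` on `L/a`,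
shows that the twisted-nilpotent vectors form an `L`-submodule. It contains the generator `w`,
so it is all of `V`. For a nonzero `v` in a submodule `W`, take `d` minimal: some product of
`d - 1` operators `T x` sends `v` to a nonzero vector of `W` killed by every `T x`, which is a
Whittaker vector.
-/

namespace Whittaker

variable {R L : Type*} [CommRing R] [LieRing L] [LieAlgebra R L]
  {a : LieSubalgebra R L} (φ : a →ₗ[R] R)
  {V : Type*} [AddCommGroup V] [Module R V] [LieRingModule L V] [LieModule R L V]

def twistedAction (x : a) : Module.End R V := LieModule.toEnd R L V x - φ x • 1

@[simp]
lemma twistedAction_apply (x : a) (v : V) :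
    twistedAction φ x v = ⁅(x : L), v⁆ - φ x • v :=
  rfl

lemma twistedAction_eq_zero_iff (x : a) (v : V) :
    twistedAction φ x v = 0 ↔ ⁅(x : L), v⁆ = φ x • v := by
  rw [twistedAction_apply, sub_eq_zero]

lemma twistedAction_lie (x : a) (y : L) (v : V) :
    twistedAction φ x ⁅y, v⁆ = ⁅⁅(x : L), y⁆, v⁆ + ⁅y, twistedAction φ x v⁆ := by
  simp only [twistedAction_apply, lie_sub, lie_smul, leibniz_lie (x : L) y v]
  abel

lemma twistedAction_mem {W : LieSubmodule R L V} (x : a) {v : V} (hv : v ∈ W) :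
    twistedAction φ x v ∈ W :=
  W.sub_mem (W.lie_mem hv) (W.smul_mem _ hv)

def twistedKernel (d : ℕ) : Submodule R V :=
  ⨅ (xs : List a) (_ : xs.length = d), LinearMap.ker (xs.map (twistedAction φ)).prod

lemma mem_twistedKernel_iff {d : ℕ} {v : V} :
    v ∈ twistedKernel φ d ↔
      ∀ xs : List a, xs.length = d → (xs.map (twistedAction φ)).prod v = 0 := by
  simp only [twistedKernel, Submodule.mem_iInf, LinearMap.mem_ker]

lemma twistedKernel_zero : twistedKernel φ 0 = (⊥ : Submodule R V) := by
  ext v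
  simp [mem_twistedKernel_iff]

lemma mem_twistedKernel_succ_iff {d : ℕ} {v : V} :
    v ∈ twistedKernel φ (d + 1) ↔ ∀ x : a, twistedAction φ x v ∈ twistedKernel φ d := by
  simp only [mem_twistedKernel_iff]
  constructor
  · intro h x xs hxs
    simpa using h (xs ++ [x]) (by simp [hxs])
  · intro h ys hys
    rcases List.eq_nil_or_concat ys with rfl | ⟨xs, x, rfl⟩
    · simp at hys
    · simpa using h x xs (by simpa using hys)

lemma twistedKernel_mono : Monotone (twistedKernel φ : ℕ → Submodule R V) := by
  refine monotone_nat_of_le_succ fun d => ?_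
  induction d with
  | zero => simp [twistedKernel_zero]
  | succ d ih =>
    intro v hv
    exact (mem_twistedKernel_succ_iff φ).2 fun x => ih ((mem_twistedKernel_succ_iff φ).1 hv x)

def IteratedBracketsMem (a : LieSubalgebra R L) (n : ℕ) (y : L) : Prop :=
  ∀ xs : List L, (∀ x ∈ xs, x ∈ a) → xs.length = n → xs.foldr (fun x z => ⁅x, z⁆) y ∈ a

lemma IteratedBracketsMem.mem {y : L} (hy : IteratedBracketsMem a 0 y) : y ∈ a :=
  hy [] (by simp) rfl

lemma IteratedBracketsMem.lie {n : ℕ} {y : L} (hy : IteratedBracketsMem a (n + 1) y) (x : a) :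
    IteratedBracketsMem a n ⁅(x : L), y⁆ := by
  intro xs hxs hlen
  simpa [List.foldr_append] using
    hy (xs ++ [(x : L)]) (by simpa [or_imp, forall_and] using hxs) (by simp [hlen])

lemma lie_mem_twistedKernel {n : ℕ} {y : L} (hy : IteratedBracketsMem a n y) {d : ℕ} {v : V}
    (hv : v ∈ twistedKernel φ d) : ⁅y, v⁆ ∈ twistedKernel φ (n + d) := by
  induction n generalizing y d v with
  | zero =>
    have hya := hy.mem
    have hTv : twistedAction φ ⟨y, hya⟩ v ∈ twistedKernel φ d :=
      mem_twistedKernel_succ_iff φ |>.1 (twistedKernel_mono φ d.le_succ hv) _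
    have hsplit : ⁅y, v⁆ = twistedAction φ ⟨y, hya⟩ v + φ ⟨y, hya⟩ • v := by simp
    rw [zero_add, hsplit]
    exact add_mem hTv (Submodule.smul_mem _ _ hv)
  | succ n ihn =>
    induction d generalizing v with
    | zero => simp_all [twistedKernel_zero]
    | succ d ihd =>
      refine mem_twistedKernel_succ_iff φ |>.2 fun x => ?_
      rw [twistedAction_lie]
      refine add_mem ?_ (ihd (mem_twistedKernel_succ_iff φ |>.1 hv x))
      have := ihn (hy.lie x) hv
      rwa [show n + (d + 1) = n + 1 + d by omega] at this

def twistedNilpotentSubmodule (hnil : ∀ y : L, ∃ n, IteratedBracketsMem a n y) :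
    LieSubmodule R L V where
  toSubmodule := ⨆ d, twistedKernel φ d
  lie_mem {y v} hv := by
    change v ∈ ⨆ d, twistedKernel φ d at hv
    change ⁅y, v⁆ ∈ ⨆ d, twistedKernel φ d
    rw [Submodule.mem_iSup_of_directed _ (twistedKernel_mono φ).directed_le] at hv ⊢
    obtain ⟨d, hd⟩ := hv
    obtain ⟨n, hn⟩ := hnil y
    exact ⟨n + d, lie_mem_twistedKernel φ hn hd⟩

lemma mem_twistedNilpotentSubmodule_iff {hnil : ∀ y : L, ∃ n, IteratedBracketsMem a n y} {v : V} :
    v ∈ twistedNilpotentSubmodule φ hnil ↔ ∃ d, v ∈ twistedKernel φ d :=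
  Submodule.mem_iSup_of_directed _ (twistedKernel_mono φ).directed_le

lemma exists_ne_zero_twistedAction_eq_zero {W : LieSubmodule R L V} {d : ℕ} {v : V}
    (hvW : v ∈ W) (hv0 : v ≠ 0) (hv : v ∈ twistedKernel φ d) :
    ∃ u ∈ W, u ≠ 0 ∧ ∀ x : a, twistedAction φ x u = 0 := by
  induction d generalizing v with
  | zero => simp_all [twistedKernel_zero]
  | succ d ih =>
    by_cases hker : ∀ x : a, twistedAction φ x v = 0
    · exact ⟨v, hvW, hv0, hker⟩
    · push Not at hker
      obtain ⟨x, hx⟩ := hker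
      exact ih (twistedAction_mem φ x hvW) hx (mem_twistedKernel_succ_iff φ |>.1 hv x)

end Whittaker

open Whittaker

theorem stmt4_general (L : Type*) [LieRing L] [LieAlgebra ℂ L]
    (a : LieSubalgebra ℂ L)
    (hnil : ∀ y : L, ∃ n : ℕ, ∀ xs : List L, (∀ x ∈ xs, x ∈ a) → xs.length = n →
      xs.foldr (fun x z => ⁅x, z⁆) y ∈ a)
    (φ : a →ₗ[ℂ] ℂ)
    (V : Type*) [AddCommGroup V] [Module ℂ V] [LieRingModule L V] [LieModule ℂ L V]
    (w : V)
    (hwh : ∀ x : a, ⁅(x : L), w⁆ = φ x • w)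
    (hgen : ∀ W : LieSubmodule ℂ L V, w ∈ W → W = ⊤) :
    ∀ W : LieSubmodule ℂ L V, W ≠ ⊥ →
      ∃ u ∈ W, u ≠ 0 ∧ ∀ x : a, ⁅(x : L), u⁆ = φ x • u := by
  intro W hW
  have hw : w ∈ twistedKernel φ 1 := mem_twistedKernel_succ_iff φ |>.2 fun x => by
    simp [twistedKernel_zero, hwh x]
  have htop : twistedNilpotentSubmodule φ hnil = ⊤ :=
    hgen _ (mem_twistedNilpotentSubmodule_iff φ |>.2 ⟨1, hw⟩)
  obtain ⟨v, hvW, hv0⟩ := (Submodule.ne_bot_iff W.toSubmodule).1 (by simpa using hW)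
  obtain ⟨d, hd⟩ := mem_twistedNilpotentSubmodule_iff φ |>.1 (htop ▸ LieSubmodule.mem_top v)
  obtain ⟨u, huW, hu0, hu⟩ := exists_ne_zero_twistedAction_eq_zero φ hvW hv0 hd
  exact ⟨u, huW, hu0, fun x => (twistedAction_eq_zero_iff φ x u).1 (hu x)⟩

/-- Let `L` be a complex Lie algebra, `a` a subalgebra acting locally
nilpotently on `L/a`, and `V` a Whittaker `L`-module of type `φ` (generated by a
nonzero vector `w` with `x·w = φ(x)w` for `x ∈ a`).  Then every nonzero
`L`-submodule of `V` contains a nonzero Whittaker vector of type `φ`. -/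
theorem stmt4 (L : Type*) [LieRing L] [LieAlgebra ℂ L]
    (a : LieSubalgebra ℂ L)
    (hnil : ∀ y : L, ∃ n : ℕ, ∀ xs : List L, (∀ x ∈ xs, x ∈ a) → xs.length = n →
      xs.foldr (fun x z => ⁅x, z⁆) y ∈ a)
    (φ : a →ₗ[ℂ] ℂ) (hφ : ∀ x y : a, φ ⁅x, y⁆ = 0)
    (V : Type*) [AddCommGroup V] [Module ℂ V] [LieRingModule L V] [LieModule ℂ L V]
    (w : V) (hw : w ≠ 0)
    (hwh : ∀ x : a, ⁅(x : L), w⁆ = φ x • w)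
    (hgen : ∀ W : LieSubmodule ℂ L V, w ∈ W → W = ⊤) :
    ∀ W : LieSubmodule ℂ L V, W ≠ ⊥ →
      ∃ u ∈ W, u ≠ 0 ∧ ∀ x : a, ⁅(x : L), u⁆ = φ x • u :=
  stmt4_general L a hnil φ V w hwh hgen
end

section
/- Let L be a Lie algebra, a a subalgebra acting locally nilpotently on L/a, and V a Whittaker L-module of type φ. If the space of Whittaker vectors V_φ = {v ∈ V : x.v = φ(x)v for all x ∈ a} is one-dimensional, then V is a simple L-module. -/
/-!
Write `ρ_φ(x) = ρ(x) - φ(x)` for `x ∈ a` and let `V_n` be the space of vectors killed by every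
product of `n` operators `ρ_φ(x)`. Local nilpotency of `a` on `L/a` gives, for each `y ∈ L`, an `N`
with `y · V_n ⊆ V_{N+n}`, so `⋃ V_n` is a submodule; it contains the generator `w`, hence is all
of `V`. A nonzero vector of a submodule `W` therefore lies in some `V_n`, and applying suitable
`ρ_φ(x)` to it produces a nonzero Whittaker vector in `W`. When the Whittaker vectors form a line,
that line contains `w`, so `w ∈ W` and `W = V`.
-/

namespace Submodule

variable {R M ι : Type*} [CommRing R] [AddCommGroup M] [Module R M]

/-- `iterComap T S n` consists of the `m` such that `T i₁ (T i₂ ⋯ (T iₙ m)) ∈ S` for all `i`. -/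
def iterComap (T : ι → Module.End R M) (S : Submodule R M) : ℕ → Submodule R M
  | 0 => S
  | n + 1 => ⨅ i, (iterComap T S n).comap (T i)

variable {T : ι → Module.End R M} {S : Submodule R M}

@[simp]
lemma iterComap_zero : iterComap T S 0 = S := rfl

lemma mem_iterComap_succ {n : ℕ} {m : M} :
    m ∈ iterComap T S (n + 1) ↔ ∀ i, T i m ∈ iterComap T S n := by
  simp only [iterComap, mem_iInf, mem_comap]

lemma iterComap_mono (h : S ≤ iterComap T S 1) : Monotone (iterComap T S) := by
  refine monotone_nat_of_le_succ fun n => ?_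
  induction n with
  | zero => exact h
  | succ n ih => exact fun m hm => mem_iterComap_succ.2 fun i => ih (mem_iterComap_succ.1 hm i)

end Submodule

open Submodule

namespace LieSubalgebra

variable {R L : Type*} [CommRing R] [LieRing L] [LieAlgebra R L] (a : LieSubalgebra R L)

/-- The `y ∈ L` such that `⁅x₁, ⁅x₂, ⋯ ⁅xₙ, y⁆⋯⁆⁆ ∈ a` for all `xᵢ ∈ a`. -/
def adFiltration (n : ℕ) : Submodule R L :=
  iterComap (fun x : a => LieAlgebra.ad R L x) a.toSubmodule n

lemma mem_adFiltration_of_forall_foldr_mem {n : ℕ} {y : L}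
    (h : ∀ xs : List L, (∀ x ∈ xs, x ∈ a) → xs.length = n → xs.foldr (fun x z => ⁅x, z⁆) y ∈ a) :
    y ∈ a.adFiltration n := by
  induction n generalizing y with
  | zero => exact h [] (by simp) rfl
  | succ n ih =>
    refine mem_iterComap_succ.2 fun x => ih fun xs hxs hlen => ?_
    simpa using h (xs ++ [(x : L)]) (by simpa [or_imp, forall_and] using hxs) (by simp [hlen])

end LieSubalgebra

namespace Whittaker

variable {R L V : Type*} [CommRing R] [LieRing L] [LieAlgebra R L]
  [AddCommGroup V] [Module R V] [LieRingModule L V] [LieModule R L V]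
  {a : LieSubalgebra R L} (φ : a →ₗ[R] R)

def twist (x : a) : Module.End R V :=
  LieModule.toEnd R L V x - φ x • 1

@[simp]
lemma twist_apply (x : a) (v : V) : twist φ x v = ⁅(x : L), v⁆ - φ x • v := rfl

lemma twist_lie (x : a) (y : L) (v : V) :
    twist φ x ⁅y, v⁆ = ⁅⁅(x : L), y⁆, v⁆ + ⁅y, twist φ x v⁆ := by
  rw [twist_apply, twist_apply, leibniz_lie, lie_sub, lie_smul]
  abel

def filtration (n : ℕ) : Submodule R V :=
  iterComap (twist φ) ⊥ n

lemma mem_filtration_one_iff {v : V} : v ∈ filtration φ 1 ↔ ∀ x : a, ⁅(x : L), v⁆ = φ x • v := by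
  simp [filtration, mem_iterComap_succ, sub_eq_zero]

lemma filtration_mono : Monotone (filtration (V := V) φ) :=
  iterComap_mono bot_le

lemma twist_mem_filtration {n : ℕ} (x : a) {v : V} (hv : v ∈ filtration φ n) :
    twist φ x v ∈ filtration φ n := by
  cases n with
  | zero => simp_all [filtration]
  | succ n => exact filtration_mono φ n.le_succ (mem_iterComap_succ.1 hv x)

lemma lie_mem_filtration {N n : ℕ} {y : L} (hy : y ∈ a.adFiltration N) {v : V}
    (hv : v ∈ filtration φ n) : ⁅y, v⁆ ∈ filtration φ (N + n) := by
  induction N generalizing n y v with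
  | zero =>
    have hya : y ∈ a := hy
    have hsplit : ⁅y, v⁆ = twist φ ⟨y, hya⟩ v + φ ⟨y, hya⟩ • v := by simp
    rw [zero_add, hsplit]
    exact add_mem (twist_mem_filtration φ _ hv) (smul_mem _ _ hv)
  | succ N ihN =>
    induction n generalizing v with
    | zero =>
      obtain rfl : v = 0 := hv
      simp
    | succ n ihn =>
      refine mem_iterComap_succ.2 fun x => ?_
      rw [twist_lie]
      refine add_mem ?_ (ihn (mem_iterComap_succ.1 hv x))
      have := ihN (mem_iterComap_succ.1 hy x) hv
      rwa [show N + (n + 1) = N + 1 + n by omega] at this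

def locallyNilpotentSubmodule (hnil : ∀ y : L, ∃ N, y ∈ a.adFiltration N) :
    LieSubmodule R L V where
  toSubmodule := ⨆ n, filtration φ n
  lie_mem {y v} hv := by
    obtain ⟨n, hn⟩ := (mem_iSup_of_directed _ (filtration_mono φ).directed_le).1 hv
    obtain ⟨N, hN⟩ := hnil y
    exact mem_iSup_of_mem (N + n) (lie_mem_filtration φ hN hn)

lemma mem_locallyNilpotentSubmodule_iff {hnil : ∀ y : L, ∃ N, y ∈ a.adFiltration N} {v : V} :
    v ∈ locallyNilpotentSubmodule φ hnil ↔ ∃ n, v ∈ filtration φ n :=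
  mem_iSup_of_directed _ (filtration_mono φ).directed_le

lemma exists_ne_zero_mem_filtration_one {W : LieSubmodule R L V} {n : ℕ} {v : V} (hvW : v ∈ W)
    (hv : v ≠ 0) (hvn : v ∈ filtration φ n) : ∃ u ∈ W, u ≠ 0 ∧ u ∈ filtration φ 1 := by
  induction n generalizing v with
  | zero => exact absurd hvn hv
  | succ n ih =>
    by_cases h : ∀ x, twist φ x v = 0
    · exact ⟨v, hvW, hv, mem_iterComap_succ.2 h⟩
    · push Not at h
      obtain ⟨x, hx⟩ := h
      exact ih (W.sub_mem (W.lie_mem hvW) (W.smul_mem _ hvW)) hx (mem_iterComap_succ.1 hvn x)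

lemma exists_whittakerVector_mem_of_ne_bot (hnil : ∀ y : L, ∃ N, y ∈ a.adFiltration N)
    {w : V} (hwh : ∀ x : a, ⁅(x : L), w⁆ = φ x • w)
    (hgen : ∀ W : LieSubmodule R L V, w ∈ W → W = ⊤) {W : LieSubmodule R L V} (hW : W ≠ ⊥) :
    ∃ u ∈ W, u ≠ 0 ∧ ∀ x : a, ⁅(x : L), u⁆ = φ x • u := by
  have htop := hgen (locallyNilpotentSubmodule φ hnil)
    ((mem_locallyNilpotentSubmodule_iff φ).2 ⟨1, (mem_filtration_one_iff φ).2 hwh⟩)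
  obtain ⟨v, hvW, hv⟩ := W.toSubmodule.exists_mem_ne_zero_of_ne_bot
    (mt (LieSubmodule.toSubmodule_eq_bot W).1 hW)
  obtain ⟨n, hn⟩ := (mem_locallyNilpotentSubmodule_iff φ).1 (htop ▸ LieSubmodule.mem_top v)
  simpa only [mem_filtration_one_iff] using exists_ne_zero_mem_filtration_one φ hvW hv hn

end Whittaker

theorem stmt5_general (L : Type*) [LieRing L] [LieAlgebra ℂ L]
    (a : LieSubalgebra ℂ L)
    (hnil : ∀ y : L, ∃ n : ℕ, ∀ xs : List L, (∀ x ∈ xs, x ∈ a) → xs.length = n →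
      xs.foldr (fun x z => ⁅x, z⁆) y ∈ a)
    (φ : a →ₗ[ℂ] ℂ)
    (V : Type*) [AddCommGroup V] [Module ℂ V] [LieRingModule L V] [LieModule ℂ L V]
    (w : V)
    (hwh : ∀ x : a, ⁅(x : L), w⁆ = φ x • w)
    (hgen : ∀ W : LieSubmodule ℂ L V, w ∈ W → W = ⊤)
    (hdim : ∃ v0 : V, v0 ≠ 0 ∧ (∀ x : a, ⁅(x : L), v0⁆ = φ x • v0) ∧
      ∀ u : V, (∀ x : a, ⁅(x : L), u⁆ = φ x • u) → ∃ c : ℂ, u = c • v0) :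
    ∀ W : LieSubmodule ℂ L V, W = ⊥ ∨ W = ⊤ := by
  intro W
  refine or_iff_not_imp_left.2 fun hW => ?_
  have hnil' (y : L) : ∃ N, y ∈ a.adFiltration N :=
    (hnil y).imp fun _ => a.mem_adFiltration_of_forall_foldr_mem
  obtain ⟨u, huW, hu, huwh⟩ := Whittaker.exists_whittakerVector_mem_of_ne_bot φ hnil' hwh hgen hW
  obtain ⟨v0, -, -, hline⟩ := hdim
  obtain ⟨c, rfl⟩ := hline u huwh
  have hv0W : v0 ∈ W := (W.smul_mem_iff (left_ne_zero_of_smul hu)).1 huW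
  obtain ⟨c', rfl⟩ := hline w hwh
  exact hgen W (W.smul_mem c' hv0W)

/-- Let `L` be a complex Lie algebra, `a` a subalgebra acting locally
nilpotently on `L/a`, and `V` a Whittaker `L`-module of type `φ`.  If the space of
Whittaker vectors `V_φ = {v : x·v = φ(x)v ∀ x ∈ a}` is one-dimensional, then `V`
is a simple `L`-module. -/
theorem stmt5 (L : Type*) [LieRing L] [LieAlgebra ℂ L]
    (a : LieSubalgebra ℂ L)
    (hnil : ∀ y : L, ∃ n : ℕ, ∀ xs : List L, (∀ x ∈ xs, x ∈ a) → xs.length = n →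
      xs.foldr (fun x z => ⁅x, z⁆) y ∈ a)
    (φ : a →ₗ[ℂ] ℂ) (hφ : ∀ x y : a, φ ⁅x, y⁆ = 0)
    (V : Type*) [AddCommGroup V] [Module ℂ V] [LieRingModule L V] [LieModule ℂ L V]
    (w : V) (hw : w ≠ 0)
    (hwh : ∀ x : a, ⁅(x : L), w⁆ = φ x • w)
    (hgen : ∀ W : LieSubmodule ℂ L V, w ∈ W → W = ⊤)
    (hdim : ∃ v0 : V, v0 ≠ 0 ∧ (∀ x : a, ⁅(x : L), v0⁆ = φ x • v0) ∧
      ∀ u : V, (∀ x : a, ⁅(x : L), u⁆ = φ x • u) → ∃ c : ℂ, u = c • v0) :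
    ∀ W : LieSubmodule ℂ L V, W = ⊥ ∨ W = ⊤ :=
  stmt5_general L a hnil φ V w hwh hgen hdim
end

section
/- Let L be a Lie algebra and a a subalgebra acting locally nilpotently on L/a, and let V be a Whittaker L-module of type φ. If v ∈ V is a nonzero vector satisfying x.v = ψ(x)v for all x ∈ a for some Lie algebra homomorphism ψ: a → C, then ψ = φ. -/
/-!
For `x ∈ a` let `x - φ x` act on `V`. The vectors killed by every sufficiently long word in these
shifted operators form an `L`-submodule: commuting `x - φ x` past `y ∈ L` produces `⁅x, y⁆`, and
local nilpotence of `a` on `L / a` means that after boundedly many such commutations the bracket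
lies in `a`, where it acts as a shifted operator plus a scalar. This submodule contains `w`, hence
is all of `V`. On an eigenvector `v` of type `ψ` the word `(x - φ x)ⁿ` acts as `(ψ x - φ x)ⁿ`, so
`ψ x = φ x`.
-/

namespace LieSubalgebra

variable {R L V : Type*} [CommRing R] [LieRing L] [LieAlgebra R L]
  [AddCommGroup V] [Module R V] [LieRingModule L V] [LieModule R L V]
  {a : LieSubalgebra R L} (φ : a →ₗ[R] R)

def shiftedEnd (x : a) : Module.End R V := LieModule.toEnd R L V x - φ x • 1

def wordEnd (l : List a) : Module.End R V := (l.map (shiftedEnd φ)).prod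

lemma shiftedEnd_apply (x : a) (u : V) : shiftedEnd φ x u = ⁅(x : L), u⁆ - φ x • u := rfl

lemma wordEnd_append_singleton (l : List a) (x : a) (u : V) :
    wordEnd φ (l ++ [x]) u = wordEnd φ l (shiftedEnd φ x u) := by
  rw [wordEnd, List.map_append, List.prod_append, List.map_singleton, List.prod_singleton]; rfl

lemma shiftedEnd_lie (x : a) (y : L) (u : V) :
    shiftedEnd φ x ⁅y, u⁆ = ⁅y, shiftedEnd φ x u⁆ + ⁅⁅(x : L), y⁆, u⁆ := by
  rw [shiftedEnd_apply, shiftedEnd_apply, leibniz_lie, lie_sub, lie_smul]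
  abel

lemma shiftedEnd_eq_smul_of_lie_eq_smul {ψ : a →ₗ[R] R} {v : V} (x : a)
    (hv : ⁅(x : L), v⁆ = ψ x • v) : shiftedEnd φ x v = (ψ x - φ x) • v := by
  rw [shiftedEnd_apply, hv, sub_smul]

lemma wordEnd_lie_eq_zero_of_mem {y : L} (hy : y ∈ a) {n : ℕ} {u : V}
    (hu : ∀ l : List a, n ≤ l.length → wordEnd φ l u = 0)
    (l : List a) (hl : n ≤ l.length) : wordEnd φ l ⁅y, u⁆ = 0 := by
  have hsplit : ⁅y, u⁆ = shiftedEnd φ ⟨y, hy⟩ u + φ ⟨y, hy⟩ • u := by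
    rw [shiftedEnd_apply]; abel
  rw [hsplit, map_add, map_smul, ← wordEnd_append_singleton,
    hu _ (by simp; omega), hu l hl, smul_zero, add_zero]

/-- Each letter of the word either passes through to `u`, using up one of the `n`, or brackets into
`y`, using up one of the `N`. -/
lemma wordEnd_lie_eq_zero (l : List a) (N n : ℕ) (y : L) (u : V)
    (hy : ∀ xs : List L, (∀ x ∈ xs, x ∈ a) → xs.length = N → xs.foldr (fun x z => ⁅x, z⁆) y ∈ a)
    (hu : ∀ l : List a, n ≤ l.length → wordEnd φ l u = 0)
    (hl : N + n ≤ l.length) : wordEnd φ l ⁅y, u⁆ = 0 := by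
  induction l using List.reverseRecOn generalizing N n y u with
  | nil => rw [show u = 0 from hu [] (by simp at hl; omega), lie_zero, map_zero]
  | append_singleton l x ih =>
    rcases N with _ | N
    · exact wordEnd_lie_eq_zero_of_mem φ (hy [] (by simp) rfl) hu _ (by omega)
    rcases n with _ | n
    · rw [show u = 0 from hu [] le_rfl, lie_zero, map_zero]
    simp only [List.length_append, List.length_singleton] at hl
    have hbracket : ∀ xs : List L, (∀ x ∈ xs, x ∈ a) → xs.length = N →
        xs.foldr (fun x z => ⁅x, z⁆) ⁅(x : L), y⁆ ∈ a := fun xs hxs hlen => by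
      simpa using hy (xs ++ [(x : L)]) (by simpa [or_imp, forall_and] using hxs) (by simp [hlen])
    have hxu : ∀ l : List a, n ≤ l.length → wordEnd φ l (shiftedEnd φ x u) = 0 :=
      fun l hl => by rw [← wordEnd_append_singleton]; exact hu _ (by simp; omega)
    rw [wordEnd_append_singleton, shiftedEnd_lie, map_add,
      ih (N + 1) n y _ hy hxu (by omega), ih N (n + 1) _ u hbracket hu (by omega), add_zero]

def shiftNilpotentSubmodule
    (hnil : ∀ y : L, ∃ n : ℕ, ∀ xs : List L, (∀ x ∈ xs, x ∈ a) → xs.length = n →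
      xs.foldr (fun x z => ⁅x, z⁆) y ∈ a) : LieSubmodule R L V where
  carrier := {u | ∃ n : ℕ, ∀ l : List a, n ≤ l.length → wordEnd φ l u = 0}
  add_mem' := by
    rintro u u' ⟨n, hn⟩ ⟨m, hm⟩
    exact ⟨max n m, fun l hl => by
      rw [map_add, hn l (le_of_max_le_left hl), hm l (le_of_max_le_right hl), add_zero]⟩
  zero_mem' := ⟨0, fun l _ => map_zero _⟩
  smul_mem' := by
    rintro c u ⟨n, hn⟩
    exact ⟨n, fun l hl => by rw [map_smul, hn l hl, smul_zero]⟩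
  lie_mem := by
    rintro y u ⟨n, hn⟩
    obtain ⟨N, hN⟩ := hnil y
    exact ⟨N + n, fun l hl => wordEnd_lie_eq_zero φ l N n y u hN hn hl⟩

variable {φ}

lemma mem_shiftNilpotentSubmodule_of_lie_eq_smul {hnil} {w : V}
    (hw : ∀ x : a, ⁅(x : L), w⁆ = φ x • w) : w ∈ shiftNilpotentSubmodule φ hnil := by
  refine ⟨1, fun l hl => ?_⟩
  obtain ⟨l, x, rfl⟩ := (List.eq_nil_or_concat l).resolve_left (by rintro rfl; simp at hl)
  rw [List.concat_eq_append, wordEnd_append_singleton, shiftedEnd_eq_smul_of_lie_eq_smul φ x (hw x),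
    sub_self, zero_smul, map_zero]

lemma eq_of_lie_eq_smul_of_mem_shiftNilpotentSubmodule [IsDomain R] [Module.IsTorsionFree R V]
    {hnil} {ψ : a →ₗ[R] R} {v : V} (hv : v ≠ 0) (hψ : ∀ x : a, ⁅(x : L), v⁆ = ψ x • v)
    (hmem : v ∈ shiftNilpotentSubmodule φ hnil) : ψ = φ := by
  obtain ⟨n, hn⟩ := hmem
  ext x
  have hpow : wordEnd φ (List.replicate n x) v = (ψ x - φ x) ^ n • v := by
    rw [wordEnd, List.map_replicate, List.prod_replicate]
    exact Module.End.HasEigenvector.pow_apply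
      ⟨Module.End.mem_eigenspace_iff.mpr (shiftedEnd_eq_smul_of_lie_eq_smul φ x (hψ x)), hv⟩ n
  have hzero : (ψ x - φ x) ^ n • v = 0 := hpow ▸ hn _ (by simp)
  exact sub_eq_zero.mp (eq_zero_of_pow_eq_zero ((smul_eq_zero.mp hzero).resolve_right hv))

end LieSubalgebra

open LieSubalgebra in
theorem stmt6_general (L : Type*) [LieRing L] [LieAlgebra ℂ L]
    (a : LieSubalgebra ℂ L)
    (hnil : ∀ y : L, ∃ n : ℕ, ∀ xs : List L, (∀ x ∈ xs, x ∈ a) → xs.length = n →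
      xs.foldr (fun x z => ⁅x, z⁆) y ∈ a)
    (φ ψ : a →ₗ[ℂ] ℂ)
    (V : Type*) [AddCommGroup V] [Module ℂ V] [LieRingModule L V] [LieModule ℂ L V]
    (w : V)
    (hwh : ∀ x : a, ⁅(x : L), w⁆ = φ x • w)
    (hgen : ∀ W : LieSubmodule ℂ L V, w ∈ W → W = ⊤)
    (v : V) (hv : v ≠ 0)
    (hwv : ∀ x : a, ⁅(x : L), v⁆ = ψ x • v) :
    ψ = φ := by
  have htop : shiftNilpotentSubmodule φ hnil = ⊤ :=
    hgen _ (mem_shiftNilpotentSubmodule_of_lie_eq_smul hwh)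
  exact eq_of_lie_eq_smul_of_mem_shiftNilpotentSubmodule hv hwv (htop ▸ LieSubmodule.mem_top v)

/-- Let `L` be a complex Lie algebra, `a` a subalgebra acting locally
nilpotently on `L/a`, and `V` a Whittaker `L`-module of type `φ`.  If a nonzero
`v ∈ V` satisfies `x·v = ψ(x)v` for all `x ∈ a` for some Lie algebra homomorphism
`ψ : a → ℂ`, then `ψ = φ`: Whittaker vectors in `V` are all of type `φ`. -/
theorem stmt6 (L : Type*) [LieRing L] [LieAlgebra ℂ L]
    (a : LieSubalgebra ℂ L)
    (hnil : ∀ y : L, ∃ n : ℕ, ∀ xs : List L, (∀ x ∈ xs, x ∈ a) → xs.length = n →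
      xs.foldr (fun x z => ⁅x, z⁆) y ∈ a)
    (φ ψ : a →ₗ[ℂ] ℂ) (hφ : ∀ x y : a, φ ⁅x, y⁆ = 0) (hψ : ∀ x y : a, ψ ⁅x, y⁆ = 0)
    (V : Type*) [AddCommGroup V] [Module ℂ V] [LieRingModule L V] [LieModule ℂ L V]
    (w : V) (hw : w ≠ 0)
    (hwh : ∀ x : a, ⁅(x : L), w⁆ = φ x • w)
    (hgen : ∀ W : LieSubmodule ℂ L V, w ∈ W → W = ⊤)
    (v : V) (hv : v ≠ 0)
    (hwv : ∀ x : a, ⁅(x : L), v⁆ = ψ x • v) :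
    ψ = φ :=
  stmt6_general L a hnil φ ψ V w hwh hgen v hv hwv
end

section
/- Let g = W ⊗ C[t,t^{-1}] be the loop Witt algebra, where W = Der(C[t]) has basis {d_i : i ≥ −1} with [d_n, d_m] = (m−n)d_{n+m}. For a fixed positive integer N, let g_{≥N} = ⊕_{n≥N} d_n ⊗ C[t,t^{-1}]. Then g_{≥N} is a Lie subalgebra of g and the pair (g, g_{≥N}) is a Whittaker pair: g_{≥N} acts locally nilpotently on g/g_{≥N}, and the lower central series of g_{≥N} has trivial intersection. -/
/-!
Grade `g` by the first index: `F m = span {D n k : m ≤ n}`. For `a, b ≥ -1` the bracket relation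
gives `⁅F a, F b⁆ ⊆ F (a + b)`, and `F (-1) = g`. Hence, for `N ≥ 1`, bracketing twice with
`g_{≥N} = F N` sends `g` into `F (2N - 1) ⊆ F N`, and the `i`-th term of the lower central series
of `g_{≥N}` lies in `F i`. Every element is a finite combination of basis vectors, so by linear
independence it cannot lie in all `F i` unless it is `0`.
-/

open Submodule

theorem LinearIndependent.eq_zero_of_forall_mem_span_image {R M ι α : Type*} [Ring R]
    [AddCommGroup M] [Module R M] {v : ι → M} (hv : LinearIndependent R v) {A : α → Set ι}
    (hA : ∀ s : Finset ι, ∃ a, Disjoint (A a) s) {x : M} (hx : ∀ a, x ∈ span R (v '' A a)) :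
    x = 0 := by
  obtain ⟨a₀, -⟩ := hA ∅
  obtain ⟨l, -, rfl⟩ := Finsupp.mem_span_image_iff_linearCombination R |>.mp (hx a₀)
  have hl : Finsupp.linearCombination R v l ∈ span R (v '' l.support) :=
    (Finsupp.mem_span_image_iff_linearCombination R).mpr ⟨l, Finsupp.mem_supported_support R l, rfl⟩
  obtain ⟨a, ha⟩ := hA l.support
  exact (mem_bot R).mp <| (hv.disjoint_span_image ha).le_bot ⟨hx a, hl⟩

namespace LoopWitt

variable (K : Type*) {g : Type*} [CommRing K] [LieRing g] [LieAlgebra K g] (D : ℤ → ℤ → g)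

def filtration (m : ℤ) : Submodule K g :=
  span K {x | ∃ n k : ℤ, m ≤ n ∧ x = D n k}

variable {K D}

theorem filtration_antitone : Antitone (filtration K D) := fun _ _ h =>
  span_mono fun _ ⟨n, k, hn, hx⟩ => ⟨n, k, h.trans hn, hx⟩

theorem filtration_neg_one_eq_top
    (hspan : span K (Set.range fun p : {q : ℤ × ℤ // -1 ≤ q.1} => D p.1.1 p.1.2) = ⊤) :
    filtration K D (-1) = ⊤ :=
  top_le_iff.mp <| hspan ▸ span_mono fun _ ⟨p, hp⟩ => ⟨p.1.1, p.1.2, p.2, hp.symm⟩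

theorem lie_mem_filtration
    (hbra : ∀ n m k l : ℤ, -1 ≤ n → -1 ≤ m →
      ⁅D n k, D m l⁆ = ((m - n : ℤ) : K) • D (n + m) (k + l))
    {a b c : ℤ} (ha : -1 ≤ a) (hb : -1 ≤ b) (hc : c ≤ a + b) {x y : g}
    (hx : x ∈ filtration K D a) (hy : y ∈ filtration K D b) :
    ⁅x, y⁆ ∈ filtration K D c := by
  refine filtration_antitone hc <| LinearMap.BilinMap.apply_apply_mem_of_mem_span _ _ _
    (LieModule.toEnd K g g : g →ₗ[K] g →ₗ[K] g) ?_ x y hx hy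
  rintro _ ⟨n, k, hn, rfl⟩ _ ⟨m, l, hm, rfl⟩
  change ⁅D n k, D m l⁆ ∈ _
  rw [hbra n m k l (ha.trans hn) (hb.trans hm)]
  exact smul_mem _ _ (subset_span ⟨n + m, k + l, add_le_add hn hm, rfl⟩)

theorem filtration_eq_span_image {m : ℤ} (hm : -1 ≤ m) :
    filtration K D m =
      span K ((fun p : {q : ℤ × ℤ // -1 ≤ q.1} => D p.1.1 p.1.2) '' {p | m ≤ p.1.1}) := by
  refine congrArg (span K) (Set.ext fun x => ⟨?_, ?_⟩)
  · rintro ⟨n, k, hn, rfl⟩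
    exact ⟨⟨(n, k), hm.trans hn⟩, hn, rfl⟩
  · rintro ⟨p, hp, rfl⟩
    exact ⟨p.1.1, p.1.2, hp, rfl⟩

theorem iInf_filtration_eq_bot
    (hli : LinearIndependent K (fun p : {q : ℤ × ℤ // -1 ≤ q.1} => D p.1.1 p.1.2)) :
    ⨅ i : ℕ, filtration K D i = ⊥ := by
  refine eq_bot_iff.mpr fun x hx => (mem_bot K).mpr <|
    hli.eq_zero_of_forall_mem_span_image (A := fun i : ℕ => {p | (i : ℤ) ≤ p.1.1}) ?_ fun i => ?_
  · intro s
    obtain ⟨M, hM⟩ := (s.image fun p => p.1.1.toNat).exists_le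
    refine ⟨M + 1, Set.disjoint_left.mpr fun p hp hps => ?_⟩
    have hp : ((M + 1 : ℕ) : ℤ) ≤ p.1.1 := hp
    have := hM _ (Finset.mem_image_of_mem _ hps)
    omega
  · rw [← filtration_eq_span_image (by omega)]
    exact mem_iInf _ |>.mp hx i

end LoopWitt

section BracketSeries

variable {R L : Type*} [Ring R] [LieRing L] [Module R L]

def bracketSeries (S : Submodule R L) (i : ℕ) : Submodule R L :=
  Nat.rec (motive := fun _ => Submodule R L) S
    (fun _ prev => span R {z : L | ∃ x ∈ S, ∃ y ∈ prev, z = ⁅x, y⁆}) i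

theorem bracketSeries_le {S : Submodule R L} {F : ℕ → Submodule R L} (h0 : S ≤ F 0)
    (hstep : ∀ i, ∀ x ∈ S, ∀ y ∈ F i, ⁅x, y⁆ ∈ F (i + 1)) (i : ℕ) :
    bracketSeries S i ≤ F i := by
  induction i with
  | zero => exact h0
  | succ i ih => exact span_le.mpr fun _ ⟨x, hx, y, hy, hz⟩ => hz ▸ hstep i x hx y (ih hy)

end BracketSeries

open LoopWitt

/-- Let `g` be the loop Witt algebra, presented abstractly as a complex
Lie algebra with basis `{D n k : n ≥ -1, k ∈ ℤ}` (`D n k = d_n ⊗ t^k`) and bracket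
`⁅D n k, D m l⁆ = (m-n) D (n+m) (k+l)`.  For a fixed positive integer `N`, the
subspace `g_{≥N} = span{D n k : n ≥ N}` is a Lie subalgebra, it acts locally
nilpotently on `g/g_{≥N}`, and its lower central series has trivial intersection;
i.e. `(g, g_{≥N})` is a Whittaker pair. -/
theorem stmt7 (g : Type*) [LieRing g] [LieAlgebra ℂ g]
    (D : ℤ → ℤ → g)
    (hli : LinearIndependent ℂ (fun p : {q : ℤ × ℤ // -1 ≤ q.1} => D p.1.1 p.1.2))
    (hspan : Submodule.span ℂ
      (Set.range fun p : {q : ℤ × ℤ // -1 ≤ q.1} => D p.1.1 p.1.2) = ⊤)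
    (hbra : ∀ n m k l : ℤ, -1 ≤ n → -1 ≤ m →
      ⁅D n k, D m l⁆ = ((m - n : ℤ) : ℂ) • D (n + m) (k + l))
    (N : ℤ) (hN : 1 ≤ N) :
    let S : Submodule ℂ g := Submodule.span ℂ {x : g | ∃ n k : ℤ, N ≤ n ∧ x = D n k}
    -- `g_{≥N}` is a Lie subalgebra
    (∀ x ∈ S, ∀ y ∈ S, ⁅x, y⁆ ∈ S) ∧
    -- `g_{≥N}` acts locally nilpotently on `g/g_{≥N}`
    (∀ y : g, ∃ n : ℕ, ∀ xs : List g, (∀ x ∈ xs, x ∈ S) → xs.length = n →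
      xs.foldr (fun x z => ⁅x, z⁆) y ∈ S) ∧
    -- the lower central series `a_0 = g_{≥N}`, `a_{i+1} = [g_{≥N}, a_i]` intersects to `0`
    (⨅ i : ℕ, (Nat.rec (motive := fun _ => Submodule ℂ g) S
      (fun _ prev => Submodule.span ℂ {z : g | ∃ x ∈ S, ∃ y ∈ prev, z = ⁅x, y⁆}) i)) = ⊥ := by
  intro S
  refine ⟨fun x hx y hy => lie_mem_filtration hbra (by omega) (by omega) (by omega) hx hy,
    fun y => ⟨2, fun xs hxs hlen => ?_⟩, ?_⟩
  · obtain ⟨a, b, rfl⟩ := List.length_eq_two.mp hlen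
    have hy : y ∈ filtration ℂ D (-1) := (filtration_neg_one_eq_top hspan).symm ▸ mem_top
    have hby := lie_mem_filtration hbra (by omega) (by omega) le_rfl (hxs b (by simp)) hy
    exact lie_mem_filtration hbra (by omega) (by omega) (by omega) (hxs a (by simp)) hby
  · have hseries : ∀ i : ℕ, bracketSeries S i ≤ filtration ℂ D i :=
      bracketSeries_le (filtration_antitone (by omega)) fun i x hx y hy =>
        lie_mem_filtration hbra (by omega) (by omega) (by omega) hx hy
    change ⨅ i, bracketSeries S i = ⊥
    exact eq_bot_iff.mpr <| (iInf_mono hseries).trans (iInf_filtration_eq_bot hli).le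
end

section
/- Let ψ: g_{≥N} → C be a Whittaker function with ψ_{2N−1}, ψ_{2N} ∈ E (both exp-polynomial). Then the universal Whittaker module W(g_{≥N}, ψ) = U(g) ⊗_{U(g_{≥N})} C v_ψ over the loop Witt algebra g is reducible. Specifically, if c(t) = Σ_{j=0}^q c_j t^j is a nonzero polynomial of degree q ≥ 1 in Ann(ψ_{2N−1}) ∩ Ann(ψ_{2N}), then u = Σ_{j=0}^q c_j (d_{N−1} ⊗ t^j) v_ψ generates a proper nonzero submodule. -/
/-!
The universal Whittaker module is modelled on the span of the PBW monomials
`d_{x₁} ⋯ d_{xᵣ} v_ψ` with `x₁ ≥ ⋯ ≥ xᵣ` and all degrees in `[-1, N - 1]`, on which `g` acts by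
straightening; the universal property maps `W(g_{≥N}, ψ)` into this model, sending `u` to a
nonzero vector. Since `c ∈ Ann(ψ_{2N-1}) ∩ Ann(ψ_{2N})`, the image of `u` is again a Whittaker
vector of type `ψ`, so `d_l v_ψ ↦ d_l u` is a `g`-endomorphism `Φ` of the model. The preimage of
its range is a submodule of `W(g_{≥N}, ψ)` containing `u` but not `v_ψ`: `Φ` raises the length
filtration by one, and on top lengths it is multiplication by the nonzero element
`∑ c_j (d_{N-1} ⊗ t^j)` of the symmetric algebra, so it never hits `v_ψ`.
-/

def IsExpPoly (φ : ℤ → ℂ) : Prop :=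
  ∃ (s : Finset (ℕ × ℂ)) (c : ℕ × ℂ → ℂ),
    (∀ p ∈ s, p.2 ≠ 0) ∧
    ∀ n : ℤ, φ n = ∑ p ∈ s, c p * (n : ℂ) ^ p.1 * p.2 ^ n

open Finsupp

section Supported

variable {R α M : Type*} [Semiring R] [AddCommMonoid M] [Module R M] {s : Set α}

lemma Finsupp.map_mem_of_mem_supported {S : Submodule R M} (F : (α →₀ R) →ₗ[R] M)
    {w : α →₀ R} (hw : w ∈ supported R R s) (h : ∀ a ∈ s, F (single a 1) ∈ S) : F w ∈ S := by
  rw [supported_eq_span_single] at hw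
  refine (Submodule.span_le (p := S.comap F)).mpr ?_ hw
  rintro _ ⟨a, ha, rfl⟩
  exact h a ha

lemma Finsupp.apply_eq_of_mem_supported {F G : (α →₀ R) →ₗ[R] M} {w : α →₀ R}
    (hw : w ∈ supported R R s) (h : ∀ a ∈ s, F (single a 1) = G (single a 1)) : F w = G w := by
  rw [supported_eq_span_single] at hw
  refine LinearMap.eqOn_span' ?_ hw
  rintro _ ⟨a, ha, rfl⟩
  exact h a ha

end Supported

-- `Module.End R M` as a Lie ring under the commutator (only a local instance in Mathlib)
attribute [local instance] LieRing.ofAssociativeRing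

section LieModuleOfEnd

variable {ι R L M : Type*} [CommRing R] [LieRing L] [LieAlgebra R L] [AddCommGroup M]
  [Module R M]

lemma Module.Basis.map_lie_apply (b : Module.Basis ι R L) (ρ : L →ₗ[R] Module.End R M)
    (h : ∀ i j m, ρ ⁅b i, b j⁆ m = ρ (b i) (ρ (b j) m) - ρ (b j) (ρ (b i) m)) (x y : L) (m : M) :
    ρ ⁅x, y⁆ m = ρ x (ρ y m) - ρ y (ρ x m) := by
  have key : (LieAlgebra.ad R L : L →ₗ[R] Module.End R L).compr₂ ρ
      = ((LieAlgebra.ad R (Module.End R M) : Module.End R M →ₗ[R] _) ∘ₗ ρ).compl₂ ρ :=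
    b.ext fun i => b.ext fun j => LinearMap.ext fun m => by simpa [Ring.lie_def] using h i j m
  simpa [Ring.lie_def] using LinearMap.congr_fun (LinearMap.congr_fun₂ key x y) m

lemma Module.Basis.map_apply_comm (b : Module.Basis ι R L) (ρ : L →ₗ[R] Module.End R M)
    (φ : Module.End R M) (h : ∀ i m, φ (ρ (b i) m) = ρ (b i) (φ m)) (x : L) (m : M) :
    φ (ρ x m) = ρ x (φ m) := by
  have key : LinearMap.llcomp R M M M φ ∘ₗ ρ = (LinearMap.llcomp R M M M).flip φ ∘ₗ ρ :=
    b.ext fun i => LinearMap.ext fun m => h i m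
  exact LinearMap.congr_fun (LinearMap.congr_fun key x) m

abbrev LieRingModule.ofEnd (ρ : L →ₗ[R] Module.End R M)
    (hρ : ∀ x y m, ρ ⁅x, y⁆ m = ρ x (ρ y m) - ρ y (ρ x m)) : LieRingModule L M where
  bracket x m := ρ x m
  add_lie x y m := by simp
  lie_add x m n := map_add _ _ _
  leibniz_lie x y m := by simp [hρ]

lemma LieModule.ofEnd (ρ : L →ₗ[R] Module.End R M)
    (hρ : ∀ x y m, ρ ⁅x, y⁆ m = ρ x (ρ y m) - ρ y (ρ x m)) :
    let _ := LieRingModule.ofEnd ρ hρ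
    LieModule R L M :=
  let _ := LieRingModule.ofEnd ρ hρ
  { smul_lie t x m := by simp [Bracket.bracket]
    lie_smul t x m := by simp [Bracket.bracket] }

end LieModuleOfEnd

section LieSpan

variable {R L M V : Type*} [CommRing R] [LieRing L] [AddCommGroup M] [Module R M]
  [AddCommGroup V] [Module R V] [LieRingModule L V] [LieRingModule L M]

lemma LieSubmodule.lieSpan_singleton_ne_top (F : V →ₗ⁅R, L⁆ M) (Φ : M →ₗ⁅R, L⁆ M) {u v : V}
    (hu : F u = Φ (F v)) (hv : ∀ m, Φ m ≠ F v) : lieSpan R L {u} ≠ ⊤ := by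
  intro htop
  have hle : lieSpan R L {u} ≤ Φ.range.comap F :=
    lieSpan_le.mpr (Set.singleton_subset_iff.mpr ⟨F v, hu.symm⟩)
  obtain ⟨m, hm⟩ := hle (htop ▸ LieSubmodule.mem_top v)
  exact hv m hm

end LieSpan

namespace LoopWitt

noncomputable section

/-! ### PBW monomials and the straightening action -/

/-- An index `x` stands for the basis vector `d_{deg x} ⊗ t^{tdeg x}`; a PBW monomial is a list
of indices, sorted decreasingly for the lexicographic order. -/
abbrev Idx := Lex (ℤ × ℤ)

def deg (x : Idx) : ℤ := (ofLex x).1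

def tdeg (x : Idx) : ℤ := (ofLex x).2

@[simp] lemma deg_add (x y : Idx) : deg (x + y) = deg x + deg y := rfl

@[simp] lemma tdeg_add (x y : Idx) : tdeg (x + y) = tdeg x + tdeg y := rfl

@[simp] lemma deg_toLex (n k : ℤ) : deg (toLex (n, k)) = n := rfl

@[simp] lemma tdeg_toLex (n k : ℤ) : tdeg (toLex (n, k)) = k := rfl

lemma bracketCoeff_eq_zero_or {x y : Idx} (hx : -1 ≤ deg x) (hy : -1 ≤ deg y) :
    ((deg y - deg x : ℤ) : ℂ) = 0 ∨ -1 ≤ deg (x + y) := by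
  rw [deg_add]
  by_cases h : -1 ≤ deg x + deg y
  · exact Or.inr h
  · left
    rw [show deg y - deg x = 0 by omega, Int.cast_zero]

abbrev Poly := List Idx →₀ ℂ

abbrev mono (l : List Idx) : Poly := single l 1

def insertSorted (x : Idx) (l : List Idx) : List Idx := l.orderedInsert (· ≥ ·) x

@[simp] lemma length_insertSorted (x : Idx) (l : List Idx) :
    (insertSorted x l).length = l.length + 1 :=
  List.orderedInsert_length _ l x

lemma mem_insertSorted {x y : Idx} {l : List Idx} : y ∈ insertSorted x l ↔ y = x ∨ y ∈ l :=
  List.mem_orderedInsert _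

lemma perm_insertSorted (x : Idx) (l : List Idx) : (insertSorted x l).Perm (x :: l) :=
  List.perm_orderedInsert _ x l

lemma insertSorted_eq_cons {x : Idx} {l : List Idx} (h : ∀ y ∈ l, y ≤ x) :
    insertSorted x l = x :: l := by
  cases l with
  | nil => rfl
  | cons y t => exact List.orderedInsert_cons_of_le _ t (h y List.mem_cons_self)

lemma insertSorted_cons_of_lt {x y : Idx} (t : List Idx) (h : x < y) :
    insertSorted x (y :: t) = y :: insertSorted x t := by
  simp [insertSorted, List.orderedInsert, not_le.mpr h]

lemma forall_mem_insertSorted_le {x y : Idx} {t : List Idx} (hxy : x < y) (ht : ∀ z ∈ t, z ≤ y) :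
    ∀ z ∈ insertSorted x t, z ≤ y := by
  intro z hz
  rcases mem_insertSorted.mp hz with rfl | hz
  · exact hxy.le
  · exact ht z hz

variable (N : ℤ) (ψ : ℤ → ℤ → ℂ)

def IsPBW (l : List Idx) : Prop :=
  l.Pairwise (· ≥ ·) ∧ ∀ x ∈ l, -1 ≤ deg x ∧ deg x ≤ N - 1

namespace IsPBW

variable {N}

lemma nil : IsPBW N [] := ⟨List.Pairwise.nil, by simp⟩

lemma of_cons {x : Idx} {t : List Idx} (h : IsPBW N (x :: t)) : IsPBW N t :=
  ⟨(List.pairwise_cons.mp h.1).2, fun y hy => h.2 y (List.mem_cons_of_mem _ hy)⟩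

lemma le_head {x : Idx} {t : List Idx} (h : IsPBW N (x :: t)) : ∀ y ∈ t, y ≤ x :=
  (List.pairwise_cons.mp h.1).1

lemma head {x : Idx} {t : List Idx} (h : IsPBW N (x :: t)) : -1 ≤ deg x ∧ deg x ≤ N - 1 :=
  h.2 x List.mem_cons_self

lemma insertSorted {x : Idx} {l : List Idx} (hl : IsPBW N l) (h₁ : -1 ≤ deg x)
    (h₂ : deg x ≤ N - 1) : IsPBW N (insertSorted x l) := by
  refine ⟨List.Pairwise.orderedInsert x l hl.1, fun y hy => ?_⟩
  rcases mem_insertSorted.mp hy with rfl | hy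
  · exact ⟨h₁, h₂⟩
  · exact hl.2 y hy

lemma cons {x : Idx} {l : List Idx} (hl : IsPBW N l) (h₁ : -1 ≤ deg x) (h₂ : deg x ≤ N - 1)
    (hle : ∀ y ∈ l, y ≤ x) : IsPBW N (x :: l) := by
  refine ⟨List.pairwise_cons.mpr ⟨hle, hl.1⟩, fun y hy => ?_⟩
  rcases List.mem_cons.mp hy with rfl | hy
  · exact ⟨h₁, h₂⟩
  · exact hl.2 y hy

end IsPBW

/-- `actFuel d x l` computes `d_x · d_l v_ψ` by the straightening rule
`x · (h t) = h (x · t) + [x, h] t` until `x` reaches its place; every fuel `d > l.length` gives the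
same result (`actFuel_congr`). The bracket term needs no guard for `deg (x + h) = -2`, where its
coefficient `deg h - deg x` vanishes. -/
def actFuel : ℕ → Idx → List Idx → Poly
  | 0, _, _ => 0
  | _ + 1, x, [] => if N ≤ deg x then ψ (deg x) (tdeg x) • mono [] else mono [x]
  | d + 1, x, h :: t =>
    if deg x ≤ N - 1 ∧ h ≤ x then mono (x :: h :: t)
    else linearCombination ℂ (actFuel d h) (actFuel d x t)
      + ((deg h - deg x : ℤ) : ℂ) • actFuel d (x + h) t

def act (x : Idx) : Poly →ₗ[ℂ] Poly :=
  linearCombination ℂ fun l => actFuel N ψ (l.length + 1) x l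

def filt (e : ℕ) : Submodule ℂ Poly := supported ℂ ℂ {l | IsPBW N l ∧ l.length ≤ e}

def model : Submodule ℂ Poly := supported ℂ ℂ {l | IsPBW N l}

def lead (x : Idx) (l : List Idx) : Poly := if deg x ≤ N - 1 then mono (insertSorted x l) else 0

def actSupport (x : Idx) (l : List Idx) : Set (List Idx) :=
  {l' | (IsPBW N l' ∧ l'.length ≤ l.length) ∨ (deg x ≤ N - 1 ∧ l' = insertSorted x l)}

/-- `ψ` vanishes on `[g_{≥N}, g_{≥N}]`, i.e. it is a Lie algebra homomorphism `g_{≥N} → ℂ`. -/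
def IsWhittakerFunction : Prop :=
  ∀ n m k l : ℤ, N ≤ n → N ≤ m → ((m - n : ℤ) : ℂ) * ψ (n + m) (k + l) = 0

/-- `Annihilates q c φ` says that `c(t) = ∑_{j ≤ q} c_j t^j` lies in `Ann(φ)`. -/
def Annihilates (q : ℕ) (c : ℕ → ℂ) (φ : ℤ → ℂ) : Prop :=
  ∀ n : ℤ, ∑ j ∈ Finset.range (q + 1), c j * φ (n + j) = 0

variable {N ψ}

@[simp] lemma linearCombination_mono (F : List Idx → Poly) (l : List Idx) :
    linearCombination ℂ F (mono l) = F l := by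
  simp [mono]

@[simp] lemma act_mono (x : Idx) (l : List Idx) :
    act N ψ x (mono l) = actFuel N ψ (l.length + 1) x l := by
  simp [act]

lemma mono_mem_supported {s : Set (List Idx)} {l : List Idx} (h : l ∈ s) :
    mono l ∈ supported ℂ ℂ s :=
  single_mem_supported ℂ _ h

lemma mono_mem_filt {l : List Idx} {e : ℕ} (hl : IsPBW N l) (he : l.length ≤ e) :
    mono l ∈ filt N e :=
  mono_mem_supported ⟨hl, he⟩

lemma mono_mem_model {l : List Idx} (hl : IsPBW N l) : mono l ∈ model N :=
  mono_mem_supported hl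

lemma filt_mono {e e' : ℕ} (h : e ≤ e') : filt N e ≤ filt N e' :=
  supported_mono fun _ hl => ⟨hl.1, hl.2.trans h⟩

lemma filt_le_model (e : ℕ) : filt N e ≤ model N :=
  supported_mono fun _ hl => hl.1

lemma lead_mem_filt {x : Idx} {l : List Idx} (hl : IsPBW N l) (hx : -1 ≤ deg x) :
    lead N x l ∈ filt N (l.length + 1) := by
  unfold lead
  split_ifs with h
  · exact mono_mem_filt (hl.insertSorted hx h) (by simp)
  · exact zero_mem _

lemma lead_mem_supported {x : Idx} {l : List Idx} :
    lead N x l ∈ supported ℂ ℂ {l' | deg x ≤ N - 1 ∧ l' = insertSorted x l} := by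
  unfold lead
  split_ifs with h
  · exact mono_mem_supported ⟨h, rfl⟩
  · exact zero_mem _

lemma actFuel_of_le {d : ℕ} {x : Idx} {l : List Idx} (hd : d ≠ 0) (hx : deg x ≤ N - 1)
    (hl : ∀ y ∈ l, y ≤ x) : actFuel N ψ d x l = mono (x :: l) := by
  obtain ⟨e, rfl⟩ := Nat.exists_eq_succ_of_ne_zero hd
  cases l with
  | nil => simp [actFuel, show ¬ N ≤ deg x by omega]
  | cons h t => simp [actFuel, hx, hl h List.mem_cons_self]

lemma actFuel_nil_of_le {d : ℕ} {x : Idx} (hd : d ≠ 0) (hx : N ≤ deg x) :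
    actFuel N ψ d x [] = ψ (deg x) (tdeg x) • mono [] := by
  obtain ⟨e, rfl⟩ := Nat.exists_eq_succ_of_ne_zero hd
  simp [actFuel, hx]

lemma mem_filt_of_sub_lead_mem {w : Poly} {x : Idx} {l : List Idx} (hl : IsPBW N l)
    (hx : -1 ≤ deg x) (h : w - lead N x l ∈ filt N l.length) : w ∈ filt N (l.length + 1) := by
  rw [← sub_add_cancel w (lead N x l)]
  exact add_mem (filt_mono (Nat.le_succ _) h) (lead_mem_filt hl hx)

lemma mem_supported_actSupport_of_sub_lead_mem {w : Poly} {x : Idx} {l : List Idx}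
    (h : w - lead N x l ∈ filt N l.length) : w ∈ supported ℂ ℂ (actSupport N x l) := by
  rw [← sub_add_cancel w (lead N x l)]
  exact add_mem (supported_mono (fun _ => Or.inl) h)
    (supported_mono (fun _ => Or.inr) lead_mem_supported)

lemma linearCombination_actFuel_lead {e : ℕ} {x h : Idx} {t : List Idx} (hl : IsPBW N (h :: t))
    (he : e ≠ 0) (hxh : ¬ (deg x ≤ N - 1 ∧ h ≤ x)) :
    linearCombination ℂ (actFuel N ψ e h) (lead N x t) = lead N x (h :: t) := by
  unfold lead
  split_ifs with hx
  · have hlt : x < h := lt_of_not_ge fun hc => hxh ⟨hx, hc⟩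
    rw [linearCombination_mono, insertSorted_cons_of_lt t hlt,
      actFuel_of_le he hl.head.2 (forall_mem_insertSorted_le hlt hl.le_head)]
  · exact map_zero _

theorem actFuel_sub_lead_mem : ∀ {d : ℕ} {x : Idx} {l : List Idx}, IsPBW N l → -1 ≤ deg x →
    l.length < d → actFuel N ψ d x l - lead N x l ∈ filt N l.length
  | 0, _, _, _, _, hd => absurd hd (Nat.not_lt_zero _)
  | e + 1, x, [], _, _, _ => by
    by_cases hN : N ≤ deg x
    · simpa [actFuel, lead, hN, show ¬ deg x ≤ N - 1 by omega]
        using Submodule.smul_mem _ (ψ (deg x) (tdeg x)) (mono_mem_filt (N := N) IsPBW.nil le_rfl)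
    · simp [actFuel, lead, hN, show deg x ≤ N - 1 by omega, insertSorted]
  | e + 1, x, h :: t, hl, hx, hd => by
    have ht := hl.of_cons
    have htd : t.length < e := by simp only [List.length_cons] at hd; omega
    by_cases hxh : deg x ≤ N - 1 ∧ h ≤ x
    · have hle : ∀ y ∈ h :: t, y ≤ x := by
        simpa [hxh.2] using fun y hy => (hl.le_head y hy).trans hxh.2
      simp [actFuel, hxh, lead, insertSorted_eq_cons hle]
    have key : actFuel N ψ (e + 1) x (h :: t) - lead N x (h :: t)
        = linearCombination ℂ (actFuel N ψ e h) (actFuel N ψ e x t - lead N x t)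
          + ((deg h - deg x : ℤ) : ℂ) • actFuel N ψ e (x + h) t := by
      rw [actFuel, if_neg hxh, map_sub, linearCombination_actFuel_lead hl (by omega) hxh]
      abel
    rw [key]
    refine add_mem (map_mem_of_mem_supported _ (actFuel_sub_lead_mem ht hx htd) ?_) ?_
    · rintro l' ⟨hl', hl't⟩
      rw [linearCombination_single, one_smul]
      exact filt_mono (by simp; omega) (mem_filt_of_sub_lead_mem hl' hl.head.1
        (actFuel_sub_lead_mem hl' hl.head.1 (by omega)))
    · rcases bracketCoeff_eq_zero_or hx hl.head.1 with h0 | hxh'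
      · rw [h0, zero_smul]; exact zero_mem _
      · exact Submodule.smul_mem _ _ (filt_mono (by simp) (mem_filt_of_sub_lead_mem ht hxh'
          (actFuel_sub_lead_mem ht hxh' htd)))

theorem actFuel_congr : ∀ {d d' : ℕ} {x : Idx} {l : List Idx}, IsPBW N l → -1 ≤ deg x →
    l.length < d → l.length < d' → actFuel N ψ d x l = actFuel N ψ d' x l
  | 0, _, _, _, _, _, hd, _ => absurd hd (Nat.not_lt_zero _)
  | _, 0, _, _, _, _, _, hd' => absurd hd' (Nat.not_lt_zero _)
  | e + 1, e' + 1, x, [], _, _, _, _ => by simp [actFuel]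
  | e + 1, e' + 1, x, h :: t, hl, hx, hd, hd' => by
    have ht := hl.of_cons
    have htd : t.length < e := by simp only [List.length_cons] at hd; omega
    have htd' : t.length < e' := by simp only [List.length_cons] at hd'; omega
    by_cases hxh : deg x ≤ N - 1 ∧ h ≤ x
    · simp [actFuel, hxh]
    rw [actFuel, actFuel, if_neg hxh, if_neg hxh, actFuel_congr ht hx htd htd']
    congr 1
    · refine apply_eq_of_mem_supported (mem_supported_actSupport_of_sub_lead_mem
        (actFuel_sub_lead_mem ht hx htd')) ?_
      rintro l' (⟨hl', hl't⟩ | ⟨hxN, rfl⟩)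
      · simp only [linearCombination_single, one_smul]
        exact actFuel_congr hl' hl.head.1 (by omega) (by omega)
      · have hlt : x < h := lt_of_not_ge fun hc => hxh ⟨hxN, hc⟩
        rw [linearCombination_single, linearCombination_single,
          actFuel_of_le (by omega) hl.head.2 (forall_mem_insertSorted_le hlt hl.le_head),
          actFuel_of_le (by omega) hl.head.2 (forall_mem_insertSorted_le hlt hl.le_head)]
    · rcases bracketCoeff_eq_zero_or hx hl.head.1 with h0 | hxh'
      · rw [h0, zero_smul, zero_smul]
      · rw [actFuel_congr ht hxh' htd htd']

lemma actFuel_eq_act {d : ℕ} {x : Idx} {l : List Idx} (hl : IsPBW N l) (hx : -1 ≤ deg x)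
    (hd : l.length < d) : actFuel N ψ d x l = act N ψ x (mono l) := by
  rw [act_mono]
  exact actFuel_congr hl hx hd (Nat.lt_succ_self _)

lemma act_mono_sub_lead_mem {x : Idx} {l : List Idx} (hl : IsPBW N l) (hx : -1 ≤ deg x) :
    act N ψ x (mono l) - lead N x l ∈ filt N l.length := by
  rw [act_mono]
  exact actFuel_sub_lead_mem hl hx (Nat.lt_succ_self _)

lemma act_mono_mem_actSupport {x : Idx} {l : List Idx} (hl : IsPBW N l) (hx : -1 ≤ deg x) :
    act N ψ x (mono l) ∈ supported ℂ ℂ (actSupport N x l) :=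
  mem_supported_actSupport_of_sub_lead_mem (act_mono_sub_lead_mem hl hx)

lemma act_mem_filt {x : Idx} (hx : -1 ≤ deg x) {e : ℕ} {w : Poly} (hw : w ∈ filt N e) :
    act N ψ x w ∈ filt N (e + 1) :=
  map_mem_of_mem_supported _ hw fun _ ⟨hl, hle⟩ =>
    filt_mono (by omega) (mem_filt_of_sub_lead_mem hl hx (act_mono_sub_lead_mem hl hx))

lemma act_mem_model {x : Idx} (hx : -1 ≤ deg x) {w : Poly} (hw : w ∈ model N) :
    act N ψ x w ∈ model N :=
  map_mem_of_mem_supported _ hw fun _ hl =>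
    filt_le_model _ (mem_filt_of_sub_lead_mem hl hx (act_mono_sub_lead_mem hl hx))

lemma act_mono_of_le {x : Idx} {l : List Idx} (hx : deg x ≤ N - 1) (hl : ∀ y ∈ l, y ≤ x) :
    act N ψ x (mono l) = mono (x :: l) := by
  rw [act_mono]
  exact actFuel_of_le (Nat.succ_ne_zero _) hx hl

lemma act_mono_nil_of_le {x : Idx} (hx : N ≤ deg x) :
    act N ψ x (mono []) = ψ (deg x) (tdeg x) • mono [] := by
  rw [act_mono]
  exact actFuel_nil_of_le one_ne_zero hx

lemma act_cons_of_not_le {x h : Idx} {t : List Idx} (hl : IsPBW N (h :: t)) (hx : -1 ≤ deg x)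
    (hxh : ¬ (deg x ≤ N - 1 ∧ h ≤ x)) :
    act N ψ x (mono (h :: t)) = act N ψ h (act N ψ x (mono t))
      + ((deg h - deg x : ℤ) : ℂ) • act N ψ (x + h) (mono t) := by
  have ht := hl.of_cons
  rw [act_mono, List.length_cons, actFuel, if_neg hxh, actFuel_eq_act ht hx (by omega)]
  congr 1
  · refine apply_eq_of_mem_supported (act_mono_mem_actSupport ht hx) ?_
    rintro l' (⟨hl', hl't⟩ | ⟨hxN, rfl⟩)
    · simp only [linearCombination_single, one_smul, act_mono]
      exact actFuel_congr hl' hl.head.1 (by omega) (by omega)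
    · have hlt : x < h := lt_of_not_ge fun hc => hxh ⟨hxN, hc⟩
      have hle := forall_mem_insertSorted_le hlt hl.le_head
      rw [linearCombination_single, one_smul, act_mono_of_le hl.head.2 hle,
        actFuel_of_le (by omega) hl.head.2 hle]
  · rcases bracketCoeff_eq_zero_or hx hl.head.1 with h0 | hxh'
    · rw [h0, zero_smul, zero_smul]
    · rw [actFuel_eq_act ht hxh' (by omega)]

lemma act_cons {x h : Idx} {t : List Idx} (hl : IsPBW N (h :: t)) (hx : -1 ≤ deg x) :
    act N ψ x (mono (h :: t)) = act N ψ h (act N ψ x (mono t))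
      + ((deg h - deg x : ℤ) : ℂ) • act N ψ (x + h) (mono t) := by
  by_cases hxh : deg x ≤ N - 1 ∧ h ≤ x
  swap
  · exact act_cons_of_not_le hl hx hxh
  have hle : ∀ y ∈ t, y ≤ x := fun y hy => (hl.le_head y hy).trans hxh.2
  rw [act_mono_of_le hxh.1 hle]
  rcases hxh.2.eq_or_lt with rfl | hlt
  · rw [sub_self, Int.cast_zero, zero_smul, add_zero, act_mono_of_le hxh.1 (by simpa using hle)]
  · have hxt : IsPBW N (x :: t) := hl.of_cons.cons hx hxh.1 hle
    rw [act_cons_of_not_le hxt hl.head.1 (fun hc => hlt.not_ge hc.2),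
      act_mono_of_le hl.head.2 hl.le_head, act_mono_of_le hxh.1 (by simpa [hxh.2] using hle),
      add_comm h x, add_assoc, ← add_smul]
    push_cast
    simp

/-! ### The commutation relations -/

variable (N ψ) in
def BracketRel (x y : Idx) (w : Poly) : Prop :=
  act N ψ x (act N ψ y w) - act N ψ y (act N ψ x w) = ((deg y - deg x : ℤ) : ℂ) • act N ψ (x + y) w

lemma smul_eq_smul_of_deg_add {M : Type*} [AddCommGroup M] [Module ℂ M] {x y : Idx} {v w : M}
    (hx : -1 ≤ deg x) (hy : -1 ≤ deg y) (h : -1 ≤ deg (x + y) → v = w) :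
    ((deg y - deg x : ℤ) : ℂ) • v = ((deg y - deg x : ℤ) : ℂ) • w := by
  rcases bracketCoeff_eq_zero_or hx hy with h0 | hxy
  · rw [h0, zero_smul, zero_smul]
  · rw [h hxy]

lemma BracketRel.symm {x y : Idx} {w : Poly} (h : BracketRel N ψ x y w) :
    BracketRel N ψ y x w := by
  rw [BracketRel, ← neg_sub, h, add_comm, ← neg_smul]
  push_cast
  ring_nf

lemma bracketRel_of_mem_supported {x y : Idx} {s : Set (List Idx)} {w : Poly}
    (hw : w ∈ supported ℂ ℂ s) (h : ∀ l ∈ s, BracketRel N ψ x y (mono l)) :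
    BracketRel N ψ x y w := by
  have := apply_eq_of_mem_supported
    (F := act N ψ x ∘ₗ act N ψ y - act N ψ y ∘ₗ act N ψ x)
    (G := ((deg y - deg x : ℤ) : ℂ) • act N ψ (x + y)) hw (by simpa [BracketRel] using h)
  simpa [BracketRel] using this

lemma bracketRel_mono_of_le {x z : Idx} {m : List Idx} (hm : IsPBW N m) (hx : -1 ≤ deg x)
    (hz : -1 ≤ deg z) (hzN : deg z ≤ N - 1) (hle : ∀ y ∈ m, y ≤ z) :
    BracketRel N ψ x z (mono m) := by
  rw [BracketRel, act_mono_of_le hzN hle, act_cons (hm.cons hz hzN hle) hx]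
  abel

lemma bracketRel_nil (hN : 0 ≤ N) (hψ : IsWhittakerFunction N ψ) {x y : Idx} (hx : -1 ≤ deg x)
    (hy : -1 ≤ deg y) : BracketRel N ψ x y (mono []) := by
  by_cases hyN : deg y ≤ N - 1
  · exact bracketRel_mono_of_le IsPBW.nil hx hy hyN (by simp)
  by_cases hxN : deg x ≤ N - 1
  · exact (bracketRel_mono_of_le IsPBW.nil hy hx hxN (by simp)).symm
  have hxN' : N ≤ deg x := by omega
  have hyN' : N ≤ deg y := by omega
  rw [BracketRel, act_mono_nil_of_le hyN', act_mono_nil_of_le hxN', map_smul, map_smul,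
    act_mono_nil_of_le hyN', act_mono_nil_of_le hxN', act_mono_nil_of_le (by simp; omega),
    smul_smul, smul_smul, mul_comm, sub_self, smul_smul, deg_add, tdeg_add,
    hψ _ _ _ _ hxN' hyN', zero_smul]

lemma bracketRel_act_mono {x y h : Idx} {t : List Idx}
    (IH : ∀ l, IsPBW N l → l.length ≤ t.length → ∀ x y : Idx, -1 ≤ deg x → -1 ≤ deg y →
      BracketRel N ψ x y (mono l))
    (hl : IsPBW N (h :: t)) (hx : -1 ≤ deg x) (hy : -1 ≤ deg y)
    (hyh : ¬ (deg y ≤ N - 1 ∧ h ≤ y)) : BracketRel N ψ x h (act N ψ y (mono t)) := by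
  refine bracketRel_of_mem_supported (act_mono_mem_actSupport hl.of_cons hy) ?_
  rintro l' (⟨hl', hl't⟩ | ⟨hyN, rfl⟩)
  · exact IH l' hl' hl't x h hx hl.head.1
  · have hlt : y < h := lt_of_not_ge fun hc => hyh ⟨hyN, hc⟩
    exact bracketRel_mono_of_le (hl.of_cons.insertSorted hy hyN) hx hl.head.1 hl.head.2
      (forall_mem_insertSorted_le hlt hl.le_head)

lemma bracketRel_cons_of_not_le {x y h : Idx} {t : List Idx}
    (IH : ∀ l, IsPBW N l → l.length ≤ t.length → ∀ x y : Idx, -1 ≤ deg x → -1 ≤ deg y →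
      BracketRel N ψ x y (mono l))
    (hl : IsPBW N (h :: t)) (hx : -1 ≤ deg x) (hy : -1 ≤ deg y)
    (hxh : ¬ (deg x ≤ N - 1 ∧ h ≤ x)) (hyh : ¬ (deg y ≤ N - 1 ∧ h ≤ y)) :
    BracketRel N ψ x y (mono (h :: t)) := by
  -- Straighten both sides and move `x`, `y` past `h`: the commutators left over are instances of
  -- the induction hypothesis.
  have ht := hl.of_cons
  have hh := hl.head.1
  have hxy := IH t ht le_rfl x y hx hy
  have hxh_y : ((deg h - deg x : ℤ) : ℂ) •
      (act N ψ (x + h) (act N ψ y (mono t)) - act N ψ y (act N ψ (x + h) (mono t)))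
      = ((deg h - deg x : ℤ) : ℂ) • (((deg y - deg (x + h) : ℤ) : ℂ) •
          act N ψ (x + y + h) (mono t)) :=
    smul_eq_smul_of_deg_add hx hh fun hxh' => by
      rw [IH t ht le_rfl _ _ hxh' hy, add_right_comm]
  have hx_yh : ((deg h - deg y : ℤ) : ℂ) •
      (act N ψ x (act N ψ (y + h) (mono t)) - act N ψ (y + h) (act N ψ x (mono t)))
      = ((deg h - deg y : ℤ) : ℂ) • (((deg (y + h) - deg x : ℤ) : ℂ) •
          act N ψ (x + y + h) (mono t)) :=
    smul_eq_smul_of_deg_add hy hh fun hyh' => by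
      rw [IH t ht le_rfl _ _ hx hyh', add_assoc]
  have hxy_h : ((deg y - deg x : ℤ) : ℂ) • act N ψ (x + y) (mono (h :: t))
      = ((deg y - deg x : ℤ) : ℂ) • (act N ψ h (act N ψ (x + y) (mono t))
          + ((deg h - deg (x + y) : ℤ) : ℂ) • act N ψ (x + y + h) (mono t)) :=
    smul_eq_smul_of_deg_add hx hy fun hxy' => act_cons hl hxy'
  have hxhy := bracketRel_act_mono IH hl hx hy hyh
  have hyhx := bracketRel_act_mono IH hl hy hx hxh
  have hhxy := congrArg (act N ψ h) hxy
  rw [BracketRel, hxy_h, act_cons hl hx, act_cons hl hy, map_add, map_add, map_smul, map_smul]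
  simp only [BracketRel, map_sub, map_smul, smul_sub, deg_add] at hxhy hyhx hhxy hxh_y hx_yh ⊢
  push_cast at hxhy hyhx hhxy hxh_y hx_yh ⊢
  linear_combination (norm := module) hxhy - hyhx + hhxy + hxh_y + hx_yh

theorem bracketRel_mono (hN : 0 ≤ N) (hψ : IsWhittakerFunction N ψ) (n : ℕ) :
    ∀ m : List Idx, IsPBW N m → m.length ≤ n → ∀ x y : Idx, -1 ≤ deg x → -1 ≤ deg y →
      BracketRel N ψ x y (mono m) := by
  induction n with
  | zero =>
    intro m _ hm x y hx hy
    rw [List.length_eq_zero_iff.mp (Nat.le_zero.mp hm)]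
    exact bracketRel_nil hN hψ hx hy
  | succ n IH =>
    rintro (_ | ⟨h, t⟩) hm hmn x y hx hy
    · exact bracketRel_nil hN hψ hx hy
    by_cases hyh : deg y ≤ N - 1 ∧ h ≤ y
    · exact bracketRel_mono_of_le hm hx hy hyh.1
        (by simpa [hyh.2] using fun z hz => (hm.le_head z hz).trans hyh.2)
    by_cases hxh : deg x ≤ N - 1 ∧ h ≤ x
    · exact (bracketRel_mono_of_le hm hy hx hxh.1
        (by simpa [hxh.2] using fun z hz => (hm.le_head z hz).trans hxh.2)).symm
    exact bracketRel_cons_of_not_le (fun l hl hlt => IH l hl (by simp at hmn; omega))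
      hm hx hy hxh hyh

lemma bracketRel (hN : 0 ≤ N) (hψ : IsWhittakerFunction N ψ) {x y : Idx} (hx : -1 ≤ deg x)
    (hy : -1 ≤ deg y) {w : Poly} (hw : w ∈ model N) : BracketRel N ψ x y w :=
  bracketRel_of_mem_supported hw fun l hl => bracketRel_mono hN hψ _ l hl le_rfl x y hx hy

variable (N ψ) in
def actEnd (x : Idx) : Module.End ℂ (model N) :=
  if hx : -1 ≤ deg x then (act N ψ x).restrict fun _ hw => act_mem_model hx hw else 0

lemma coe_actEnd {x : Idx} (hx : -1 ≤ deg x) (w : model N) :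
    (actEnd N ψ x w : Poly) = act N ψ x w := by
  simp [actEnd, hx]

lemma actEnd_comm (hN : 0 ≤ N) (hψ : IsWhittakerFunction N ψ) {x y : Idx} (hx : -1 ≤ deg x)
    (hy : -1 ≤ deg y) (w : model N) :
    actEnd N ψ x (actEnd N ψ y w) - actEnd N ψ y (actEnd N ψ x w)
      = ((deg y - deg x : ℤ) : ℂ) • actEnd N ψ (x + y) w := by
  apply Subtype.ext
  rw [Submodule.coe_sub, coe_actEnd hx, coe_actEnd hy, coe_actEnd hy, coe_actEnd hx,
    bracketRel hN hψ hx hy w.2, Submodule.coe_smul]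
  exact smul_eq_smul_of_deg_add hx hy fun hxy => (coe_actEnd hxy w).symm

/-! ### The endomorphism `v_ψ ↦ u` -/

lemma IsWhittakerFunction.eq_zero (hψ : IsWhittakerFunction N ψ) {s : ℤ} (hs : 2 * N + 1 ≤ s)
    (k : ℤ) : ψ s k = 0 := by
  have h := hψ N (s - N) k 0 le_rfl (by omega)
  rw [show N + (s - N) = s by ring, add_zero] at h
  refine (mul_eq_zero.mp h).resolve_left ?_
  exact_mod_cast (show s - N - N ≠ 0 by omega)

variable {q : ℕ} {c : ℕ → ℂ}

lemma IsWhittakerFunction.annihilates (hψ : IsWhittakerFunction N ψ)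
    (h₁ : Annihilates q c (ψ (2 * N - 1))) (h₂ : Annihilates q c (ψ (2 * N))) :
    ∀ s, N ≤ s → Annihilates q c (ψ (s + (N - 1))) := by
  intro s hs
  rcases hs.eq_or_lt with rfl | hs
  · rwa [show N + (N - 1) = 2 * N - 1 by ring]
  rcases (show N + 1 ≤ s by omega).eq_or_lt with rfl | hs
  · rwa [show N + 1 + (N - 1) = 2 * N by ring]
  intro n
  simp [hψ.eq_zero (show 2 * N + 1 ≤ s + (N - 1) by omega)]

variable (N) in
def uIdx (j : ℕ) : Idx := toLex (N - 1, j)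

variable (N q c) in
def uVec : Poly := ∑ j ∈ Finset.range (q + 1), c j • mono [uIdx N j]

variable (N ψ q c) in
/-- The endomorphism `d_l v_ψ ↦ d_l u` of the model. -/
def endU : Poly →ₗ[ℂ] Poly :=
  linearCombination ℂ fun l => l.foldr (fun z w => act N ψ z w) (uVec N q c)

@[simp] lemma endU_mono_nil : endU N ψ q c (mono []) = uVec N q c := by
  simp [endU]

@[simp] lemma endU_mono_cons (h : Idx) (t : List Idx) :
    endU N ψ q c (mono (h :: t)) = act N ψ h (endU N ψ q c (mono t)) := by
  simp [endU]

lemma isPBW_uIdx (hN : 0 ≤ N) (j : ℕ) : IsPBW N [uIdx N j] :=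
  IsPBW.nil.cons (by simp [uIdx]; omega) (by simp [uIdx]) (by simp)

lemma uVec_mem_model (hN : 0 ≤ N) : uVec N q c ∈ model N :=
  Submodule.sum_mem _ fun j _ => Submodule.smul_mem _ _ (mono_mem_model (isPBW_uIdx hN j))

lemma endU_mono_mem_model (hN : 0 ≤ N) {l : List Idx} (hl : IsPBW N l) :
    endU N ψ q c (mono l) ∈ model N := by
  induction l with
  | nil => simpa using uVec_mem_model hN
  | cons h t ih => simpa using act_mem_model hl.head.1 (ih hl.of_cons)

lemma endU_mem_model (hN : 0 ≤ N) {w : Poly} (hw : w ∈ model N) : endU N ψ q c w ∈ model N :=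
  map_mem_of_mem_supported _ hw fun _ hl => endU_mono_mem_model hN hl

/-- `u` is a Whittaker vector of the same type as `v_ψ`: this is where `c ∈ Ann(ψ_{2N-1})` and
`c ∈ Ann(ψ_{2N})` enter. -/
lemma act_uVec_of_le (hN : 0 < N) (hA : ∀ s, N ≤ s → Annihilates q c (ψ (s + (N - 1))))
    {x : Idx} (hx : N ≤ deg x) : act N ψ x (uVec N q c) = ψ (deg x) (tdeg x) • uVec N q c := by
  have hterm : ∀ j, act N ψ x (mono [uIdx N j]) = ψ (deg x) (tdeg x) • mono [uIdx N j]
      + (((N - 1 - deg x : ℤ) : ℂ) * ψ (deg x + (N - 1)) (tdeg x + j)) • mono [] := by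
    intro j
    rw [act_cons (isPBW_uIdx hN.le j) (by omega), act_mono_nil_of_le hx,
      act_mono_nil_of_le (by simp [uIdx]; omega), map_smul,
      act_mono_of_le (by simp [uIdx]) (by simp), smul_smul]
    simp [uIdx]
  simp only [uVec, map_sum, map_smul, hterm, smul_add, Finset.sum_add_distrib, smul_smul]
  rw [← Finset.sum_smul]
  have h0 : ∑ j ∈ Finset.range (q + 1),
      c j * (((N - 1 - deg x : ℤ) : ℂ) * ψ (deg x + (N - 1)) (tdeg x + j)) = 0 := by
    simp_rw [mul_left_comm (c _)]
    rw [← Finset.mul_sum, hA _ hx (tdeg x), mul_zero]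
  rw [h0, zero_smul, add_zero, Finset.smul_sum]
  simp_rw [smul_smul, mul_comm]

lemma endU_act_mono_nil (hN : 0 < N)
    (hA : ∀ s, N ≤ s → Annihilates q c (ψ (s + (N - 1)))) (x : Idx) :
    endU N ψ q c (act N ψ x (mono [])) = act N ψ x (endU N ψ q c (mono [])) := by
  by_cases hxN : deg x ≤ N - 1
  · rw [act_mono_of_le hxN (by simp), endU_mono_cons]
  · rw [act_mono_nil_of_le (by omega), map_smul, endU_mono_nil,
      act_uVec_of_le hN hA (by omega)]

lemma endU_act_mono (hN : 0 < N) (hψ : IsWhittakerFunction N ψ)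
    (hA : ∀ s, N ≤ s → Annihilates q c (ψ (s + (N - 1)))) (n : ℕ) :
    ∀ l : List Idx, IsPBW N l → l.length ≤ n → ∀ x : Idx, -1 ≤ deg x →
      endU N ψ q c (act N ψ x (mono l)) = act N ψ x (endU N ψ q c (mono l)) := by
  induction n with
  | zero =>
    intro l _ hl x hx
    rw [List.length_eq_zero_iff.mp (Nat.le_zero.mp hl)]
    exact endU_act_mono_nil hN hA x
  | succ n IH =>
    rintro (_ | ⟨h, t⟩) hl hln x hx
    · exact endU_act_mono_nil hN hA x
    have ht := hl.of_cons
    have htn : t.length ≤ n := by simp at hln; omega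
    by_cases hxh : deg x ≤ N - 1 ∧ h ≤ x
    · rw [act_mono_of_le hxh.1
        (by simpa [hxh.2] using fun z hz => (hl.le_head z hz).trans hxh.2), endU_mono_cons]
    have hcomm : endU N ψ q c (act N ψ h (act N ψ x (mono t)))
        = act N ψ h (endU N ψ q c (act N ψ x (mono t))) := by
      refine apply_eq_of_mem_supported (F := endU N ψ q c ∘ₗ act N ψ h)
        (G := act N ψ h ∘ₗ endU N ψ q c) (act_mono_mem_actSupport ht hx) ?_
      rintro l' (⟨hl', hl't⟩ | ⟨hxN, rfl⟩)
      · exact IH l' hl' (by omega) h hl.head.1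
      · have hlt : x < h := lt_of_not_ge fun hc => hxh ⟨hxN, hc⟩
        simp only [LinearMap.comp_apply]
        rw [act_mono_of_le hl.head.2 (forall_mem_insertSorted_le hlt hl.le_head),
          endU_mono_cons]
    have hbr : ((deg h - deg x : ℤ) : ℂ) • endU N ψ q c (act N ψ (x + h) (mono t))
        = ((deg h - deg x : ℤ) : ℂ) • act N ψ (x + h) (endU N ψ q c (mono t)) :=
      smul_eq_smul_of_deg_add hx hl.head.1 fun hxh' => IH t ht htn _ hxh'
    have hrel := bracketRel hN.le hψ hx hl.head.1
      (endU_mono_mem_model (ψ := ψ) (q := q) (c := c) hN.le ht)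
    rw [act_cons_of_not_le hl hx hxh, map_add, map_smul, hcomm, hbr, IH t ht htn x hx,
      endU_mono_cons, ← hrel]
    abel

lemma endU_act (hN : 0 < N) (hψ : IsWhittakerFunction N ψ)
    (hA : ∀ s, N ≤ s → Annihilates q c (ψ (s + (N - 1)))) {x : Idx} (hx : -1 ≤ deg x) {w : Poly}
    (hw : w ∈ model N) : endU N ψ q c (act N ψ x w) = act N ψ x (endU N ψ q c w) :=
  apply_eq_of_mem_supported (F := endU N ψ q c ∘ₗ act N ψ x) (G := act N ψ x ∘ₗ endU N ψ q c) hw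
    fun l hl => endU_act_mono hN hψ hA _ l hl le_rfl x hx

/-! ### The leading term of `endU` -/

lemma insertSorted_insertSorted {h z : Idx} {t : List Idx} (hl : IsPBW N (h :: t)) :
    insertSorted h (insertSorted z t) = insertSorted z (h :: t) := by
  refine List.Perm.eq_of_pairwise' (List.Pairwise.orderedInsert _ _
    (List.Pairwise.orderedInsert _ _ hl.of_cons.1)) (List.Pairwise.orderedInsert _ _ hl.1) ?_
  refine (perm_insertSorted _ _).trans ?_
  refine ((perm_insertSorted _ _).cons h).trans ?_
  exact (List.Perm.swap z h t).trans (perm_insertSorted _ _).symm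

variable (N q c) in
/-- The top-length part of `endU (mono l)`: the product of `d_l` and `u` in the symmetric
algebra. -/
def leadU (l : List Idx) : Poly :=
  ∑ j ∈ Finset.range (q + 1), c j • mono (insertSorted (uIdx N j) l)

lemma endU_mono_sub_leadU_mem (hN : 0 ≤ N) {l : List Idx} (hl : IsPBW N l) :
    endU N ψ q c (mono l) - leadU N q c l ∈ filt N l.length := by
  induction l with
  | nil => simp [leadU, uVec, insertSorted]
  | cons h t ih =>
    have ht := hl.of_cons
    have key : endU N ψ q c (mono (h :: t)) - leadU N q c (h :: t)
        = act N ψ h (endU N ψ q c (mono t) - leadU N q c t)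
          + ∑ j ∈ Finset.range (q + 1), c j • (act N ψ h (mono (insertSorted (uIdx N j) t))
            - lead N h (insertSorted (uIdx N j) t)) := by
      simp only [leadU, lead, if_pos hl.head.2, insertSorted_insertSorted hl, endU_mono_cons,
        map_sub, map_sum, map_smul, smul_sub, Finset.sum_sub_distrib]
      abel
    rw [key]
    refine add_mem (act_mem_filt hl.head.1 (ih ht)) (Submodule.sum_mem _ fun j _ => ?_)
    refine Submodule.smul_mem _ _ ?_
    have hj : IsPBW N (insertSorted (uIdx N j) t) :=
      ht.insertSorted (by simp [uIdx]; omega) (by simp [uIdx])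
    simpa using act_mono_sub_lead_mem hj hl.head.1

variable (N) in
def uDeg (l : List Idx) : ℤ := (l.map fun a => if deg a = N - 1 then tdeg a else 0).sum

lemma uDeg_perm {l l' : List Idx} (h : l.Perm l') : uDeg N l = uDeg N l' :=
  (h.map _).sum_eq

lemma uDeg_uIdx_cons (j : ℕ) (l : List Idx) : uDeg N (uIdx N j :: l) = j + uDeg N l := by
  simp [uDeg, uIdx]

/-- For `l'` maximal in `(length, uDeg)`, the term `c_q (d_{N-1} ⊗ t^q) d_{l'}` of `leadU l'`
occurs in no other `leadU l`. -/
lemma insertSorted_uIdx_eq_iff {j : ℕ} {l l' : List Idx} (hl : IsPBW N l) (hl' : IsPBW N l')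
    (hj : j ≤ q) (hdeg : l.length = l'.length → uDeg N l ≤ uDeg N l') :
    insertSorted (uIdx N j) l = insertSorted (uIdx N q) l' ↔ j = q ∧ l = l' := by
  refine ⟨fun h => ?_, by rintro ⟨rfl, rfl⟩; rfl⟩
  have hperm : (uIdx N j :: l).Perm (uIdx N q :: l') :=
    (perm_insertSorted _ _).symm.trans (h ▸ perm_insertSorted _ _)
  have hlen : l.length = l'.length := by simpa using hperm.length_eq
  have hsum := uDeg_perm (N := N) hperm
  rw [uDeg_uIdx_cons, uDeg_uIdx_cons] at hsum
  have := hdeg hlen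
  obtain rfl : j = q := by omega
  exact ⟨rfl, List.Perm.eq_of_pairwise' hl.1 hl'.1 hperm.cons_inv⟩

lemma endU_mono_apply (hN : 0 ≤ N) {l l' : List Idx} (hl : IsPBW N l) (hl' : IsPBW N l')
    (hlen : l.length ≤ l'.length) (hdeg : l.length = l'.length → uDeg N l ≤ uDeg N l') :
    endU N ψ q c (mono l) (insertSorted (uIdx N q) l') = if l = l' then c q else 0 := by
  have hlow : (endU N ψ q c (mono l) - leadU N q c l) (insertSorted (uIdx N q) l') = 0 := by
    by_contra hne
    have := (mem_supported ℂ _).mp (endU_mono_sub_leadU_mem (ψ := ψ) hN hl)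
      (mem_support_iff.mpr hne)
    simp only [Set.mem_ofPred_eq, length_insertSorted] at this
    omega
  rw [Finsupp.sub_apply, sub_eq_zero] at hlow
  rw [hlow, leadU, Finset.sum_apply']
  simp only [Finsupp.smul_apply, single_apply, smul_eq_mul, mul_ite, mul_one, mul_zero]
  rw [Finset.sum_congr rfl fun j hj => if_congr
    (insertSorted_uIdx_eq_iff hl hl' (Finset.mem_range_succ_iff.mp hj) hdeg) rfl rfl]
  by_cases h : l = l' <;> simp [h]

lemma uVec_ne_zero (hcq : c q ≠ 0) : uVec N q c ≠ 0 := by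
  intro h
  have := congrArg (· [uIdx N q]) h
  simp [uVec, single_apply, uIdx] at this
  exact hcq this

theorem endU_ne_mono_nil (hN : 0 ≤ N) (hcq : c q ≠ 0) {w : Poly} (hw : w ∈ model N) :
    endU N ψ q c w ≠ mono [] := by
  intro hcontra
  rcases eq_or_ne w 0 with rfl | hw0
  · exact single_ne_zero.mpr one_ne_zero (hcontra.symm.trans (map_zero _))
  obtain ⟨l', hl'w, hmax⟩ := w.support.exists_max_image (fun l => toLex (l.length, uDeg N l))
    (support_nonempty_iff.mpr hw0)
  have hpbw : ∀ l ∈ w.support, IsPBW N l := fun l hl => (mem_supported ℂ w).mp hw hl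
  have hsum : endU N ψ q c w = ∑ l ∈ w.support, w l • endU N ψ q c (mono l) := by
    conv_lhs => rw [← w.sum_single]
    rw [Finsupp.sum, map_sum]
    exact Finset.sum_congr rfl fun l _ => by rw [← smul_single_one, map_smul]
  have key := congrArg (· (insertSorted (uIdx N q) l')) hcontra
  simp only [hsum, Finset.sum_apply', Finsupp.smul_apply, smul_eq_mul] at key
  rw [Finset.sum_eq_single l' (fun l hl hll' => ?_) (fun h => absurd hl'w h),
    endU_mono_apply hN (hpbw l' hl'w) (hpbw l' hl'w) le_rfl (fun _ => le_rfl), if_pos rfl] at key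
  · rw [mono, single_apply, if_neg (fun h => by simpa using congrArg List.length h)] at key
    exact mul_ne_zero (mem_support_iff.mp hl'w) hcq key
  · have := Prod.Lex.toLex_le_toLex.mp (hmax l hl)
    rw [endU_mono_apply hN (hpbw l hl) (hpbw l' hl'w) (by omega) (by omega), if_neg hll',
      mul_zero]

/-! ### The representation of `g` on the model -/

variable (N) in
def vac : model N := ⟨mono [], mono_mem_model IsPBW.nil⟩

section Representation

variable {g : Type*} [LieRing g] [LieAlgebra ℂ g] {D : ℤ → ℤ → g}
  (hli : LinearIndependent ℂ fun p : {q : ℤ × ℤ // -1 ≤ q.1} => D p.1.1 p.1.2)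
  (hspan : Submodule.span ℂ (Set.range fun p : {q : ℤ × ℤ // -1 ≤ q.1} => D p.1.1 p.1.2) = ⊤)

variable (N ψ) in
def rep : g →ₗ[ℂ] Module.End ℂ (model N) :=
  (Module.Basis.mk hli hspan.ge).constr ℂ fun p => actEnd N ψ (toLex p.1)

lemma rep_D {n : ℤ} (hn : -1 ≤ n) (k : ℤ) :
    rep N ψ hli hspan (D n k) = actEnd N ψ (toLex (n, k)) := by
  have := (Module.Basis.mk hli hspan.ge).constr_basis ℂ (fun p => actEnd N ψ (toLex p.1))
    ⟨(n, k), hn⟩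
  rwa [Module.Basis.mk_apply] at this

lemma rep_lie (hN : 0 ≤ N) (hψ : IsWhittakerFunction N ψ)
    (hbra : ∀ n m k l : ℤ, -1 ≤ n → -1 ≤ m →
      ⁅D n k, D m l⁆ = ((m - n : ℤ) : ℂ) • D (n + m) (k + l)) (x y : g) (w : model N) :
    rep N ψ hli hspan ⁅x, y⁆ w = rep N ψ hli hspan x (rep N ψ hli hspan y w)
      - rep N ψ hli hspan y (rep N ψ hli hspan x w) := by
  refine (Module.Basis.mk hli hspan.ge).map_lie_apply _ ?_ x y w
  rintro ⟨⟨n, k⟩, hn⟩ ⟨⟨m, l⟩, hm⟩ w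
  dsimp only at hn hm
  simp only [Module.Basis.mk_apply]
  rw [hbra n m k l hn hm, map_smul, LinearMap.smul_apply, rep_D hli hspan hn, rep_D hli hspan hm,
    actEnd_comm hN hψ (x := toLex (n, k)) (y := toLex (m, l)) hn hm]
  exact smul_eq_smul_of_deg_add (x := toLex (n, k)) (y := toLex (m, l)) hn hm fun h => by
    rw [rep_D hli hspan (n := n + m) h]; rfl

lemma rep_vac (hN : 0 ≤ N) {n : ℤ} (hn : N ≤ n) (k : ℤ) :
    rep N ψ hli hspan (D n k) (vac N) = ψ n k • vac N := by
  apply Subtype.ext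
  rw [rep_D hli hspan (by omega), coe_actEnd (by simp; omega)]
  exact act_mono_nil_of_le hn

lemma coe_sum_rep_vac (hN : 0 ≤ N) :
    ((∑ j ∈ Finset.range (q + 1), c j • rep N ψ hli hspan (D (N - 1) j) (vac N) : model N) : Poly)
      = uVec N q c := by
  simp only [Submodule.coe_sum, Submodule.coe_smul, uVec]
  refine Finset.sum_congr rfl fun j _ => ?_
  rw [rep_D hli hspan (by omega), coe_actEnd (by simp; omega)]
  exact congrArg _ (act_mono_of_le (by simp) (by simp))

theorem exists_intertwiner_of_annihilates (hN : 0 < N) (hψ : IsWhittakerFunction N ψ)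
    (hA : ∀ s, N ≤ s → Annihilates q c (ψ (s + (N - 1)))) (hcq : c q ≠ 0) :
    ∃ Φ : Module.End ℂ (model N),
      (∀ x w, Φ (rep N ψ hli hspan x w) = rep N ψ hli hspan x (Φ w)) ∧
      Φ (vac N) = ∑ j ∈ Finset.range (q + 1), c j • rep N ψ hli hspan (D (N - 1) j) (vac N) ∧
      Φ (vac N) ≠ 0 ∧ ∀ w, Φ w ≠ vac N := by
  refine ⟨(endU N ψ q c).restrict fun _ hw => endU_mem_model hN.le hw, ?_, ?_, ?_, ?_⟩
  · intro x w
    refine (Module.Basis.mk hli hspan.ge).map_apply_comm (rep N ψ hli hspan) _ ?_ x w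
    rintro ⟨⟨n, k⟩, hn⟩ w
    dsimp only at hn
    apply Subtype.ext
    simp only [Module.Basis.mk_apply, rep_D hli hspan hn, LinearMap.restrict_apply,
      coe_actEnd (show -1 ≤ deg (toLex (n, k)) from hn)]
    exact endU_act hN hψ hA (x := toLex (n, k)) hn w.2
  · exact Subtype.ext ((endU_mono_nil).trans (coe_sum_rep_vac hli hspan hN.le).symm)
  · exact fun h => uVec_ne_zero hcq ((endU_mono_nil).symm.trans (congrArg Subtype.val h))
  · exact fun w h => endU_ne_mono_nil hN.le hcq w.2 (congrArg Subtype.val h)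

end Representation

end

end LoopWitt

theorem stmt9_general     (g : Type*) [LieRing g] [LieAlgebra ℂ g]
    (D : ℤ → ℤ → g)
    (hli : LinearIndependent ℂ (fun p : {q : ℤ × ℤ // -1 ≤ q.1} => D p.1.1 p.1.2))
    (hspan : Submodule.span ℂ
      (Set.range fun p : {q : ℤ × ℤ // -1 ≤ q.1} => D p.1.1 p.1.2) = ⊤)
    (hbra : ∀ n m k l : ℤ, -1 ≤ n → -1 ≤ m →
      ⁅D n k, D m l⁆ = ((m - n : ℤ) : ℂ) • D (n + m) (k + l))
    (N : ℤ) (hN : 1 ≤ N)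
    (ψ : ℤ → ℤ → ℂ)
    (hψhom : ∀ n m k l : ℤ, N ≤ n → N ≤ m → ((m - n : ℤ) : ℂ) * ψ (n + m) (k + l) = 0)
    (V : Type) [AddCommGroup V] [Module ℂ V] [LieRingModule g V] [LieModule ℂ g V]
    (v : V)
    (huniv : ∀ (V' : Type) [AddCommGroup V'] [Module ℂ V'] [LieRingModule g V']
      [LieModule ℂ g V'] (v' : V'),
      (∀ n k : ℤ, N ≤ n → ⁅D n k, v'⁆ = ψ n k • v') →
      ∃ f : V →ₗ[ℂ] V', f v = v' ∧ ∀ (x : g) (u : V), f ⁅x, u⁆ = ⁅x, f u⁆)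
    (q : ℕ) (c : ℕ → ℂ) (hcq : c q ≠ 0)
    (hann1 : ∀ n : ℤ, ∑ j ∈ Finset.range (q + 1), c j * ψ (2 * N - 1) (n + (j : ℤ)) = 0)
    (hann2 : ∀ n : ℤ, ∑ j ∈ Finset.range (q + 1), c j * ψ (2 * N) (n + (j : ℤ)) = 0) :
    LieSubmodule.lieSpan ℂ g
        {∑ j ∈ Finset.range (q + 1), c j • ⁅D (N - 1) (j : ℤ), v⁆} ≠ ⊥ ∧
    LieSubmodule.lieSpan ℂ g
        {∑ j ∈ Finset.range (q + 1), c j • ⁅D (N - 1) (j : ℤ), v⁆} ≠ ⊤ := by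
  have hρ := LoopWitt.rep_lie hli hspan (by omega) hψhom hbra
  let _ := LieRingModule.ofEnd (M := LoopWitt.model N) (LoopWitt.rep N ψ hli hspan) hρ
  have _ := LieModule.ofEnd (M := LoopWitt.model N) (LoopWitt.rep N ψ hli hspan) hρ
  obtain ⟨f, hfv, hf⟩ := huniv _ (LoopWitt.vac N) fun n k hn =>
    LoopWitt.rep_vac hli hspan (by omega) hn k
  obtain ⟨Φ, hΦ, hΦv, hΦ0, hΦ_ne⟩ := LoopWitt.exists_intertwiner_of_annihilates hli hspan
    (by omega) hψhom (LoopWitt.IsWhittakerFunction.annihilates hψhom hann1 hann2) hcq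
  let F : V →ₗ⁅ℂ, g⁆ LoopWitt.model N := { f with map_lie' := hf _ _ }
  have hFu : F (∑ j ∈ Finset.range (q + 1), c j • ⁅D (N - 1) (j : ℤ), v⁆) = Φ (F v) := by
    simp only [F, map_sum, map_smul, LieModuleHom.coe_mk, hf, hfv, hΦv]
    rfl
  refine ⟨?_, LieSubmodule.lieSpan_singleton_ne_top F ⟨Φ, hΦ _ _⟩ hFu
    (by simpa [F, hfv] using hΦ_ne)⟩
  rw [Ne, LieSubmodule.lieSpan_eq_bot_iff]
  intro h
  exact hΦ0 (by rw [← hfv]; exact hFu.symm.trans ((h _ rfl).symm ▸ map_zero F))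

/-- Let `ψ : g_{≥N} → ℂ` be a Whittaker function for the loop Witt
algebra with `ψ_{2N-1}, ψ_{2N} ∈ E`, and let `c(t) = Σ_{j=0}^q c_j t^j` be a nonzero
polynomial of degree `q ≥ 1` lying in `Ann(ψ_{2N-1}) ∩ Ann(ψ_{2N})`.  Then in the
universal Whittaker module `W(g_{≥N}, ψ)` (characterized here by cyclicity and its
universal property), the vector `u = Σ_j c_j (d_{N-1} ⊗ t^j) v_ψ` generates a
proper nonzero submodule; in particular `W(g_{≥N}, ψ)` is reducible. -/
theorem stmt9     (g : Type*) [LieRing g] [LieAlgebra ℂ g]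
    (D : ℤ → ℤ → g)
    (hli : LinearIndependent ℂ (fun p : {q : ℤ × ℤ // -1 ≤ q.1} => D p.1.1 p.1.2))
    (hspan : Submodule.span ℂ
      (Set.range fun p : {q : ℤ × ℤ // -1 ≤ q.1} => D p.1.1 p.1.2) = ⊤)
    (hbra : ∀ n m k l : ℤ, -1 ≤ n → -1 ≤ m →
      ⁅D n k, D m l⁆ = ((m - n : ℤ) : ℂ) • D (n + m) (k + l))
    (N : ℤ) (hN : 1 ≤ N)
    (ψ : ℤ → ℤ → ℂ)
    (hψhom : ∀ n m k l : ℤ, N ≤ n → N ≤ m → ((m - n : ℤ) : ℂ) * ψ (n + m) (k + l) = 0)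
    (V : Type) [AddCommGroup V] [Module ℂ V] [LieRingModule g V] [LieModule ℂ g V]
    (v : V) (hv : v ≠ 0)
    (hwhit : ∀ n k : ℤ, N ≤ n → ⁅D n k, v⁆ = ψ n k • v)
    (hgen : ∀ W : LieSubmodule ℂ g V, v ∈ W → W = ⊤)
    (huniv : ∀ (V' : Type) [AddCommGroup V'] [Module ℂ V'] [LieRingModule g V']
      [LieModule ℂ g V'] (v' : V'),
      (∀ n k : ℤ, N ≤ n → ⁅D n k, v'⁆ = ψ n k • v') →
      ∃ f : V →ₗ[ℂ] V', f v = v' ∧ ∀ (x : g) (u : V), f ⁅x, u⁆ = ⁅x, f u⁆)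
    (hE1 : IsExpPoly (ψ (2 * N - 1))) (hE2 : IsExpPoly (ψ (2 * N)))
    (q : ℕ) (hq : 1 ≤ q) (c : ℕ → ℂ) (hcq : c q ≠ 0)
    (hann1 : ∀ n : ℤ, ∑ j ∈ Finset.range (q + 1), c j * ψ (2 * N - 1) (n + (j : ℤ)) = 0)
    (hann2 : ∀ n : ℤ, ∑ j ∈ Finset.range (q + 1), c j * ψ (2 * N) (n + (j : ℤ)) = 0) :
    LieSubmodule.lieSpan ℂ g
        {∑ j ∈ Finset.range (q + 1), c j • ⁅D (N - 1) (j : ℤ), v⁆} ≠ ⊥ ∧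
    LieSubmodule.lieSpan ℂ g
        {∑ j ∈ Finset.range (q + 1), c j • ⁅D (N - 1) (j : ℤ), v⁆} ≠ ⊤ :=
  stmt9_general g D hli hspan hbra N hN ψ hψhom V v huniv q c hcq hann1 hann2
end

section
/- Let ψ: g_{≥N} → C be a Whittaker function with ψ_{2N−1}, ψ_{2N} ∈ E. For any f_1(t), ..., f_s(t) ∈ Ann(ψ_{2N−1}) ∩ Ann(ψ_{2N}), the vector Π_{j=1}^s (d_{N−1} ⊗ f_j(t)) v_ψ is a Whittaker vector of W(g_{≥N}, ψ): it satisfies (d_n ⊗ t^k).w = ψ(d_n ⊗ t^k) w for all n ≥ N, k ∈ Z. -/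
section LoopWitt

/-- `D n k` stands for `d_n ⊗ t^k`; only the indices `n ≥ -1` belong to the loop Witt algebra. -/
def IsLoopWittFamily {L : Type*} (R : Type*) [CommRing R] [LieRing L] [LieAlgebra R L]
    (D : ℤ → ℤ → L) : Prop :=
  ∀ n m k l : ℤ, -1 ≤ n → -1 ≤ m → ⁅D n k, D m l⁆ = ((m - n : ℤ) : R) • D (n + m) (k + l)

variable {R L M : Type*} [CommRing R] [LieRing L] [LieAlgebra R L]
  [AddCommGroup M] [Module R M] [LieRingModule L M] [LieModule R L M]

/-- `ψ n k = ψ(d_n ⊗ t^k)` kills every bracket of `g_{≥N}`. -/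
def IsWhittakerFunction (N : ℤ) (ψ : ℤ → ℤ → R) : Prop :=
  ∀ n m k l : ℤ, N ≤ n → N ≤ m → ((m - n : ℤ) : R) * ψ (n + m) (k + l) = 0

def IsWhittakerVector (D : ℤ → ℤ → L) (N : ℤ) (ψ : ℤ → ℤ → R) (u : M) : Prop :=
  ∀ n k : ℤ, N ≤ n → ⁅D n k, u⁆ = ψ n k • u

/-- `f ∈ Ann(φ)` for the Laurent polynomial `f = ∑ f m t^m`. -/
def Annihilates (f : ℤ →₀ R) (φ : ℤ → R) : Prop :=
  ∀ r : ℤ, (f.sum fun m a => a * φ (r + m)) = 0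

/-- `d_i ⊗ f`. -/
def loopElem (D : ℤ → ℤ → L) (i : ℤ) (f : ℤ →₀ R) : L :=
  f.sum fun m a => a • D i m

theorem loopElem_lie (D : ℤ → ℤ → L) (i : ℤ) (f : ℤ →₀ R) (u : M) :
    ⁅loopElem D i f, u⁆ = f.sum fun m a => a • ⁅D i m, u⁆ := by
  simp only [loopElem, Finsupp.sum, sum_lie, smul_lie]

theorem IsWhittakerFunction.eq_zero_of_two_mul_lt [IsDomain R] [CharZero R] {N : ℤ}
    {ψ : ℤ → ℤ → R} (hψ : IsWhittakerFunction N ψ) {i : ℤ} (hi : 2 * N < i) (r : ℤ) :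
    ψ i r = 0 := by
  have h := hψ N (i - N) 0 r le_rfl (by omega)
  rw [add_sub_cancel, zero_add, mul_eq_zero, Int.cast_eq_zero] at h
  exact h.resolve_left (by omega)

theorem IsWhittakerFunction.annihilates_of_le [IsDomain R] [CharZero R] {N : ℤ}
    {ψ : ℤ → ℤ → R} (hψ : IsWhittakerFunction N ψ) {f : ℤ →₀ R}
    (h₁ : Annihilates f (ψ (2 * N - 1))) (h₂ : Annihilates f (ψ (2 * N))) {n : ℤ}
    (hn : N ≤ n) : Annihilates f (ψ (n + (N - 1))) := by
  obtain rfl | rfl | hlt : N = n ∨ N + 1 = n ∨ N + 2 ≤ n := by omega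
  · simpa only [show N + (N - 1) = 2 * N - 1 by ring] using h₁
  · simpa only [show N + 1 + (N - 1) = 2 * N by ring] using h₂
  · refine fun k => Finset.sum_eq_zero fun m _ => ?_
    beta_reduce
    rw [hψ.eq_zero_of_two_mul_lt (i := n + (N - 1)) (by omega), mul_zero]

theorem IsWhittakerVector.lie_lie_loopElem {D : ℤ → ℤ → L} {N : ℤ} {ψ : ℤ → ℤ → R} {u : M}
    (hu : IsWhittakerVector D N ψ u) (hD : IsLoopWittFamily R D) {n i : ℤ} (hn : -1 ≤ n)
    (hi : -1 ≤ i) (hni : N ≤ n + i) (k : ℤ) (f : ℤ →₀ R) :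
    ⁅⁅D n k, loopElem D i f⁆, u⁆ =
      (((i - n : ℤ) : R) * f.sum fun m a => a * ψ (n + i) (k + m)) • u := by
  simp only [loopElem, Finsupp.sum, lie_sum, lie_smul, hD n i k _ hn hi, sum_lie, smul_lie,
    hu _ _ hni, smul_smul, Finset.mul_sum, Finset.sum_smul]
  refine Finset.sum_congr rfl fun m _ => ?_
  ring_nf

theorem IsWhittakerVector.lie_loopElem [IsDomain R] [CharZero R] {D : ℤ → ℤ → L} {N : ℤ}
    {ψ : ℤ → ℤ → R} {u : M} (hu : IsWhittakerVector D N ψ u) (hD : IsLoopWittFamily R D)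
    (hN : 1 ≤ N) (hψ : IsWhittakerFunction N ψ) {f : ℤ →₀ R}
    (h₁ : Annihilates f (ψ (2 * N - 1))) (h₂ : Annihilates f (ψ (2 * N))) :
    IsWhittakerVector D N ψ ⁅loopElem D (N - 1) f, u⁆ := by
  intro n k hn
  rw [leibniz_lie, hu n k hn, lie_smul,
    hu.lie_lie_loopElem hD (n := n) (i := N - 1) (by omega) (by omega) (by omega),
    hψ.annihilates_of_le h₁ h₂ hn k, mul_zero, zero_smul, zero_add]

theorem IsWhittakerVector.foldr_lie_loopElem [IsDomain R] [CharZero R] {D : ℤ → ℤ → L}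
    {N : ℤ} {ψ : ℤ → ℤ → R} {v : M} (hv : IsWhittakerVector D N ψ v)
    (hD : IsLoopWittFamily R D) (hN : 1 ≤ N) (hψ : IsWhittakerFunction N ψ) :
    ∀ l : List (ℤ →₀ R), (∀ f ∈ l, Annihilates f (ψ (2 * N - 1)) ∧ Annihilates f (ψ (2 * N))) →
      IsWhittakerVector D N ψ (l.foldr (fun f u => ⁅loopElem D (N - 1) f, u⁆) v)
  | [], _ => hv
  | f :: l, hl =>
    (hv.foldr_lie_loopElem hD hN hψ l fun g hg => hl g (List.mem_cons_of_mem f hg)).lie_loopElem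
      hD hN hψ (hl f List.mem_cons_self).1 (hl f List.mem_cons_self).2

end LoopWitt

theorem stmt12_general     (g : Type*) [LieRing g] [LieAlgebra ℂ g]
    (D : ℤ → ℤ → g)
    (hbra : ∀ n m k l : ℤ, -1 ≤ n → -1 ≤ m →
      ⁅D n k, D m l⁆ = ((m - n : ℤ) : ℂ) • D (n + m) (k + l))
    (N : ℤ) (hN : 1 ≤ N)
    (ψ : ℤ → ℤ → ℂ)
    (hψhom : ∀ n m k l : ℤ, N ≤ n → N ≤ m → ((m - n : ℤ) : ℂ) * ψ (n + m) (k + l) = 0)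
    (V : Type) [AddCommGroup V] [Module ℂ V] [LieRingModule g V] [LieModule ℂ g V]
    (v : V)
    (hwhit : ∀ n k : ℤ, N ≤ n → ⁅D n k, v⁆ = ψ n k • v)
    (s : ℕ) (f : Fin s → (ℤ →₀ ℂ))
    (hann1 : ∀ (j : Fin s) (n : ℤ), ((f j).sum fun m a => a * ψ (2 * N - 1) (n + m)) = 0)
    (hann2 : ∀ (j : Fin s) (n : ℤ), ((f j).sum fun m a => a * ψ (2 * N) (n + m)) = 0) :
    ∀ n k : ℤ, N ≤ n →
      ⁅D n k, (List.ofFn f).foldr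
          (fun fj u => fj.sum fun m a => a • ⁅D (N - 1) m, u⁆) v⁆ =
        ψ n k • (List.ofFn f).foldr
          (fun fj u => fj.sum fun m a => a • ⁅D (N - 1) m, u⁆) v := by
  have hact : (fun (fj : ℤ →₀ ℂ) (u : V) => fj.sum fun m a => a • ⁅D (N - 1) m, u⁆) =
      fun fj u => ⁅loopElem D (N - 1) fj, u⁆ := by
    funext fj u
    rw [loopElem_lie]
  rw [hact]
  refine IsWhittakerVector.foldr_lie_loopElem (D := D) hwhit hbra hN hψhom _ fun fj hfj => ?_
  obtain ⟨j, rfl⟩ := List.mem_ofFn.mp hfj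
  exact ⟨hann1 j, hann2 j⟩

/-- Let `ψ : g_{≥N} → ℂ` be a Whittaker function for the loop Witt
algebra with `ψ_{2N-1}, ψ_{2N} ∈ E`.  For Laurent polynomials
`f_1, …, f_s ∈ Ann(ψ_{2N-1}) ∩ Ann(ψ_{2N})` (encoded as `f j : ℤ →₀ ℂ`), the vector
`Π_{j=1}^s (d_{N-1} ⊗ f_j) v_ψ` is a Whittaker vector of `W(g_{≥N}, ψ)`:
`(d_n ⊗ t^k)` acts on it by `ψ n k` for all `n ≥ N`, `k ∈ ℤ`. -/
theorem stmt12     (g : Type*) [LieRing g] [LieAlgebra ℂ g]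
    (D : ℤ → ℤ → g)
    (hli : LinearIndependent ℂ (fun p : {q : ℤ × ℤ // -1 ≤ q.1} => D p.1.1 p.1.2))
    (hspan : Submodule.span ℂ
      (Set.range fun p : {q : ℤ × ℤ // -1 ≤ q.1} => D p.1.1 p.1.2) = ⊤)
    (hbra : ∀ n m k l : ℤ, -1 ≤ n → -1 ≤ m →
      ⁅D n k, D m l⁆ = ((m - n : ℤ) : ℂ) • D (n + m) (k + l))
    (N : ℤ) (hN : 1 ≤ N)
    (ψ : ℤ → ℤ → ℂ)
    (hψhom : ∀ n m k l : ℤ, N ≤ n → N ≤ m → ((m - n : ℤ) : ℂ) * ψ (n + m) (k + l) = 0)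
    (V : Type) [AddCommGroup V] [Module ℂ V] [LieRingModule g V] [LieModule ℂ g V]
    (v : V) (hv : v ≠ 0)
    (hwhit : ∀ n k : ℤ, N ≤ n → ⁅D n k, v⁆ = ψ n k • v)
    (hgen : ∀ W : LieSubmodule ℂ g V, v ∈ W → W = ⊤)
    (huniv : ∀ (V' : Type) [AddCommGroup V'] [Module ℂ V'] [LieRingModule g V']
      [LieModule ℂ g V'] (v' : V'),
      (∀ n k : ℤ, N ≤ n → ⁅D n k, v'⁆ = ψ n k • v') →
      ∃ f : V →ₗ[ℂ] V', f v = v' ∧ ∀ (x : g) (u : V), f ⁅x, u⁆ = ⁅x, f u⁆)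
    (hE1 : IsExpPoly (ψ (2 * N - 1))) (hE2 : IsExpPoly (ψ (2 * N)))
    (s : ℕ) (f : Fin s → (ℤ →₀ ℂ))
    (hann1 : ∀ (j : Fin s) (n : ℤ), ((f j).sum fun m a => a * ψ (2 * N - 1) (n + m)) = 0)
    (hann2 : ∀ (j : Fin s) (n : ℤ), ((f j).sum fun m a => a * ψ (2 * N) (n + m)) = 0) :
    ∀ n k : ℤ, N ≤ n →
      ⁅D n k, (List.ofFn f).foldr
          (fun fj u => fj.sum fun m a => a • ⁅D (N - 1) m, u⁆) v⁆ =
        ψ n k • (List.ofFn f).foldr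
          (fun fj u => fj.sum fun m a => a • ⁅D (N - 1) m, u⁆) v :=
  stmt12_general g D hbra N hN ψ hψhom V v hwhit s f hann1 hann2
end
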